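/- arXiv:math/0211445 — 3 statements merged into one kernel-verified Lean document; each statement's English description precedes it below -/
import Mathlib

section
/- Let p : E² → ℤ₊ be given by p(−1/2, 0) = 2, p(1/2, 0) = 1, and p = 0 elsewhere. Then d_{E²}^min(p, (0, 1/3)) ≤ 1/8 while m_{E²}(p, (0, 1/3)) = 1/6; in particular d_{E²}^min(p, (0, 1/3)) < m_{E²}(p, (0, 1/3)). -/
open Complex Set Filter Asymptotics
open scoped ENNReal

noncomputable section

/-- The open unit disc `E ⊆ ℂ`. -/
def discE : Set ℂ := {z : ℂ | ‖z‖ < 1}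

/-- The Möbius function `m_E(a,z) = |(z-a)/(1 - conj a · z)|`. -/
def mE (a z : ℂ) : ℝ := ‖(z - a) / (1 - (starRingEnd ℂ) a * z)‖

/-- A domain: a nonempty open connected set. -/
def IsDom {V : Type*} [NormedAddCommGroup V] [NormedSpace ℂ V] (G : Set V) : Prop :=
  IsOpen G ∧ IsConnected G

variable {V W : Type*} [NormedAddCommGroup V] [NormedSpace ℂ V]
  [NormedAddCommGroup W] [NormedSpace ℂ W]

/-- `ord_a f ≥ k` : `f(w) = O(‖w - a‖^k)` as `w → a`. -/
def OrdGE (f : V → ℂ) (a : V) (k : ℕ) : Prop :=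
  f =O[nhds a] fun w => ‖w - a‖ ^ k

/-- The generalized Möbius function `m_G(p, z)` with integer weights `p`. -/
def mFun (G : Set V) (p : V → ℕ) (z : V) : ℝ :=
  sSup {r : ℝ | ∃ f : V → ℂ, DifferentiableOn ℂ f G ∧ MapsTo f G discE ∧
    (∀ a ∈ G, OrdGE f a (p a)) ∧ r = ‖f z‖}

/-- The Lempert function `k̃*_G(a,z)`. -/
def lemp (G : Set V) (a z : V) : ℝ :=
  sInf {r : ℝ | ∃ μ ∈ discE, ∃ φ : ℂ → V, DifferentiableOn ℂ φ discE ∧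
    MapsTo φ discE G ∧ φ 0 = a ∧ φ μ = z ∧ r = ‖μ‖}

/-- `d_G^max(p,z) = inf { k̃*_G(a,z) ^ p(a) : a ∈ G }` (real exponents). -/
def dMax (G : Set V) (p : V → ℝ) (z : V) : ℝ :=
  sInf {r : ℝ | ∃ a ∈ G, r = lemp G a z ^ p a}

/-- Possibly infinite product `∏_{a ∈ A} h a`, defined as the infimum of finite subproducts. -/
def infProd {α : Type*} (A : Set α) (h : α → ℝ) : ℝ :=
  sInf {r : ℝ | ∃ B : Finset α, ↑B ⊆ A ∧ r = ∏ a ∈ B, h a}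

/-- `sup p (f⁻¹(μ))`, the supremum of the weights on the fiber over `μ`, in `[0,∞]`. -/
def fiberSup (G : Set V) (p : V → ℝ) (f : V → ℂ) (μ : ℂ) : ℝ≥0∞ :=
  ⨆ a ∈ {a ∈ G | f a = μ}, ENNReal.ofReal (p a)

/-- The factor `|μ| ^ (sup p (f⁻¹(μ)))`, equal to `0` when the exponent is infinite. -/
def minTerm (G : Set V) (p : V → ℝ) (f : V → ℂ) (μ : ℂ) : ℝ :=
  if fiberSup G p f μ = ⊤ then 0 else ‖μ‖ ^ (fiberSup G p f μ).toReal

/-- `d_G^min(p,z) = sup { ∏_{μ ∈ f(G)} |μ| ^ (sup p (f⁻¹(μ))) : f ∈ O(G,E), f(z) = 0 }`. -/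
def dMin (G : Set V) (p : V → ℝ) (z : V) : ℝ :=
  sSup {r : ℝ | ∃ f : V → ℂ, DifferentiableOn ℂ f G ∧ MapsTo f G discE ∧
    f z = 0 ∧ r = infProd (f '' G) (minTerm G p f)}

/-- The unit disc viewed as a domain in `ℂ¹ = (Fin 1 → ℂ)`. -/
def E1 : Set (Fin 1 → ℂ) := {z : Fin 1 → ℂ | ‖z 0‖ < 1}

/-- The unit polydisc `Eⁿ ⊆ ℂⁿ`. -/
def polyDisc (n : ℕ) : Set (Fin n → ℂ) := {z : Fin n → ℂ | ∀ j, ‖z j‖ < 1}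

open Metric
open scoped Topology

namespace S14

lemma normSq_blaschke (μ ζ : ℂ) :
    Complex.normSq (1 - (starRingEnd ℂ) μ * ζ) - Complex.normSq (ζ - μ)
      = (1 - Complex.normSq μ) * (1 - Complex.normSq ζ) := by
  simp only [Complex.normSq_apply, Complex.sub_re, Complex.sub_im, Complex.mul_re,
    Complex.mul_im, Complex.one_re, Complex.one_im, Complex.conj_re, Complex.conj_im]
  ring

lemma normSq_lt_one {μ : ℂ} (h : ‖μ‖ < 1) : Complex.normSq μ < 1 := by
  have : Complex.normSq μ = ‖μ‖ ^ 2 := by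
    rw [Complex.normSq_eq_norm_sq]
  rw [this]
  nlinarith [norm_nonneg μ]

lemma blaschke_lt {μ ζ : ℂ} (hμ : ‖μ‖ < 1) (hζ : ‖ζ‖ < 1) :
    ‖ζ - μ‖ < ‖1 - (starRingEnd ℂ) μ * ζ‖ := by
  have h := normSq_blaschke μ ζ
  have h1 : Complex.normSq (ζ - μ) < Complex.normSq (1 - (starRingEnd ℂ) μ * ζ) := by
    nlinarith [normSq_lt_one hμ, normSq_lt_one hζ]
  have e1 : Complex.normSq (ζ - μ) = ‖ζ - μ‖ ^ 2 := by
    rw [Complex.normSq_eq_norm_sq]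
  have e2 : Complex.normSq (1 - (starRingEnd ℂ) μ * ζ) = ‖1 - (starRingEnd ℂ) μ * ζ‖ ^ 2 := by
    rw [Complex.normSq_eq_norm_sq]
  rw [e1, e2] at h1
  exact lt_of_pow_lt_pow_left₀ 2 (norm_nonneg _) h1

lemma one_sub_ne {μ ζ : ℂ} (hμ : ‖μ‖ < 1) (hζ : ‖ζ‖ < 1) :
    1 - (starRingEnd ℂ) μ * ζ ≠ 0 := by
  intro h
  have h2 : (1:ℂ) = (starRingEnd ℂ) μ * ζ := by linear_combination h
  have : (1:ℝ) = ‖(starRingEnd ℂ) μ * ζ‖ := by rw [← h2, norm_one]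
  rw [norm_mul, RCLike.norm_conj] at this
  nlinarith [norm_nonneg μ, norm_nonneg ζ]

/-- Möbius map of the disc. -/
def mob (μ ζ : ℂ) : ℂ := (ζ - μ) / (1 - (starRingEnd ℂ) μ * ζ)

lemma norm_mob_lt {μ ζ : ℂ} (hμ : ‖μ‖ < 1) (hζ : ‖ζ‖ < 1) : ‖mob μ ζ‖ < 1 := by
  rw [mob, norm_div]
  rw [div_lt_one (norm_pos_iff.mpr (one_sub_ne hμ hζ))]
  simpa using blaschke_lt hμ hζ

lemma mob_self (μ : ℂ) : mob μ μ = 0 := by simp [mob]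

lemma mob_zero (μ : ℂ) : mob μ 0 = -μ := by simp [mob]

lemma mob_inv {q z : ℂ} (hq : ‖q‖ < 1) (hz : ‖z‖ < 1) : mob (-q) (mob q z) = z := by
  have h1 : 1 - (starRingEnd ℂ) q * z ≠ 0 := one_sub_ne hq hz
  have hm : ‖mob q z‖ < 1 := norm_mob_lt hq hz
  have h2 : 1 - (starRingEnd ℂ) (-q) * mob q z ≠ 0 :=
    one_sub_ne (by simpa using hq) hm
  have h3 : 1 - (starRingEnd ℂ) q * q ≠ 0 := one_sub_ne hq hq
  have h1' : 1 - z * (starRingEnd ℂ) q ≠ 0 := by rwa [mul_comm] at h1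
  unfold mob at h2 ⊢
  rw [div_eq_iff h2]
  rw [map_neg]
  field_simp
  ring

lemma mob_eq_zero_iff {q z : ℂ} (hq : ‖q‖ < 1) (hz : ‖z‖ < 1) : mob q z = 0 ↔ z = q := by
  rw [mob, div_eq_zero_iff, sub_eq_zero]
  have := one_sub_ne hq hz
  tauto



lemma mob_differentiableOn {μ : ℂ} (hμ : ‖μ‖ < 1) :
    DifferentiableOn ℂ (mob μ) (ball 0 1) := by
  intro z hz
  have h := one_sub_ne hμ (mem_ball_zero_iff.mp hz)
  apply DifferentiableAt.differentiableWithinAt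
  show DifferentiableAt ℂ (fun ζ : ℂ => (ζ - μ) / (1 - (starRingEnd ℂ) μ * ζ)) z
  exact (differentiableAt_id.sub_const μ).div
    (((differentiableAt_const _).mul differentiableAt_id).const_sub 1) h

lemma schwarz_pick {g : ℂ → ℂ} (hd : DifferentiableOn ℂ g (ball 0 1))
    (hb : ∀ z ∈ ball (0:ℂ) 1, ‖g z‖ ≤ 1) {q : ℂ} (hq : ‖q‖ < 1) (h0 : g q = 0)
    {z : ℂ} (hz : ‖z‖ < 1) : ‖g z‖ * ‖1 - (starRingEnd ℂ) q * z‖ ≤ ‖z - q‖ := by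
  rcases eq_or_ne z q with rfl | hzq
  · simp [h0]
  -- the Möbius map M with M 0 = q
  set M : ℂ → ℂ := mob (-q) with hM
  have hq' : ‖-q‖ < 1 := by simpa using hq
  have hMd : DifferentiableOn ℂ M (ball 0 1) := mob_differentiableOn hq'
  have hMmaps : MapsTo M (ball 0 1) (ball 0 1) := by
    intro w hw
    exact mem_ball_zero_iff.mpr (norm_mob_lt hq' (mem_ball_zero_iff.mp hw))
  have hM0 : M 0 = q := by
    rw [hM, mob_zero, neg_neg]
  set w₀ : ℂ := mob q z with hw₀def
  have hw₀ : ‖w₀‖ < 1 := norm_mob_lt hq hz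
  have hw₀0 : w₀ ≠ 0 := by
    rw [hw₀def, Ne, mob_eq_zero_iff hq hz]
    exact hzq
  have hMw₀ : M w₀ = z := mob_inv hq hz
  -- scaled composition
  have key : ∀ c : ℝ, 0 < c → c < 1 → c * ‖g z‖ ≤ ‖w₀‖ := by
    intro c hc0 hc1
    set h : ℂ → ℂ := fun w => (c : ℂ) * g (M w) with hh
    have hhd : DifferentiableOn ℂ h (ball 0 1) :=
      ((hd.comp hMd hMmaps).const_smul (c:ℂ)).congr (fun w _ => by simp [hh, smul_eq_mul])
    have hh0 : h 0 = 0 := by simp [hh, hM0, h0]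
    have hhmaps : MapsTo h (ball 0 1) (ball (h 0) 1) := by
      rw [hh0]
      intro w hw
      rw [mem_ball_zero_iff]
      have := hb (M w) (hMmaps hw)
      have hcn : ‖(c:ℂ)‖ = c := by
        rw [Complex.norm_real, Real.norm_of_nonneg hc0.le]
      calc ‖h w‖ = c * ‖g (M w)‖ := by rw [hh]; simp only []; rw [norm_mul, hcn]
      _ ≤ c * 1 := by nlinarith
      _ < 1 := by linarith
    have := Complex.norm_dslope_le_div_of_mapsTo_ball hhd (hhmaps.mono_right ball_subset_closedBall) (mem_ball_zero_iff.mpr hw₀)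
    rw [div_one] at this
    rw [dslope_of_ne _ hw₀0, slope_def_field, hh0, sub_zero, sub_zero] at this
    have : ‖h w₀‖ / ‖w₀‖ ≤ 1 := by
      rw [← norm_div]
      exact this
    have hpos : (0:ℝ) < ‖w₀‖ := norm_pos_iff.mpr hw₀0
    rw [div_le_one hpos] at this
    calc c * ‖g z‖ = ‖h w₀‖ := by
          rw [hh]; simp only []
          rw [hMw₀, norm_mul, Complex.norm_real, Real.norm_of_nonneg hc0.le]
    _ ≤ ‖w₀‖ := this
  have hgw : ‖g z‖ ≤ ‖w₀‖ := by
    by_contra hcon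
    push_neg at hcon
    have hg0 : 0 < ‖g z‖ := lt_of_le_of_lt (norm_nonneg _) hcon
    set c : ℝ := (‖w₀‖ + ‖g z‖) / (2 * ‖g z‖) with hc
    have hc0 : 0 < c := by positivity
    have hc1 : c < 1 := by
      rw [hc, div_lt_one (by positivity)]
      linarith
    have := key c hc0 hc1
    rw [hc, div_mul_eq_mul_div, div_le_iff₀ (by positivity)] at this
    nlinarith
  -- convert
  have hden : (0:ℝ) < ‖1 - (starRingEnd ℂ) q * z‖ := norm_pos_iff.mpr (one_sub_ne hq hz)
  have : ‖w₀‖ = ‖z - q‖ / ‖1 - (starRingEnd ℂ) q * z‖ := by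
    rw [hw₀def]; unfold mob; rw [norm_div]
  rw [this] at hgw
  rw [← le_div_iff₀ hden]
  exact hgw

/-- the "divide out a zero at `q`" operation. -/
def peelFun (q : ℂ) (g : ℂ → ℂ) : ℂ → ℂ :=
  fun z => (1 - (starRingEnd ℂ) q * z) * dslope g q z

lemma peel_diff {g : ℂ → ℂ} {q : ℂ} (hq : ‖q‖ < 1)
    (hd : DifferentiableOn ℂ g (ball 0 1)) :
    DifferentiableOn ℂ (peelFun q g) (ball 0 1) := by
  have h1 : DifferentiableOn ℂ (dslope g q) (ball 0 1) :=
    (Complex.differentiableOn_dslope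
      (isOpen_ball.mem_nhds (mem_ball_zero_iff.mpr hq))).mpr hd
  exact (((differentiable_const _).mul differentiable_id).const_sub
    (1:ℂ)).differentiableOn.mul h1

lemma peel_bound {g : ℂ → ℂ} {q : ℂ} (hq : ‖q‖ < 1)
    (hd : DifferentiableOn ℂ g (ball 0 1))
    (hb : ∀ z ∈ ball (0:ℂ) 1, ‖g z‖ ≤ 1) (h0 : g q = 0) :
    ∀ z ∈ ball (0:ℂ) 1, ‖peelFun q g z‖ ≤ 1 := by
  have hball : ∀ z ∈ ball (0:ℂ) 1, z ≠ q → ‖peelFun q g z‖ ≤ 1 := by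
    intro z hz hzq
    have hz' := mem_ball_zero_iff.mp hz
    have hsp := schwarz_pick hd hb hq h0 hz'
    have hzq' : z - q ≠ 0 := sub_ne_zero.mpr hzq
    rw [peelFun, dslope_of_ne _ hzq, slope_def_field, h0, sub_zero, norm_mul, norm_div]
    rw [mul_div_assoc']
    rw [div_le_one (norm_pos_iff.mpr hzq')]
    calc ‖1 - (starRingEnd ℂ) q * z‖ * ‖g z‖ = ‖g z‖ * ‖1 - (starRingEnd ℂ) q * z‖ := by ring
    _ ≤ ‖z - q‖ := hsp
  intro z hz
  rcases eq_or_ne z q with rfl | hzq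
  · -- continuity argument at the point q itself
    have hcont : ContinuousAt (peelFun z g) z := by
      have := (peel_diff hq hd) z hz
      exact (this.differentiableAt (isOpen_ball.mem_nhds hz)).continuousAt
    have hne : (𝓝[≠] z).NeBot := by infer_instance
    have hev : ∀ᶠ w in 𝓝[≠] z, ‖peelFun z g w‖ ≤ 1 := by
      filter_upwards [self_mem_nhdsWithin,
        eventually_nhdsWithin_of_eventually_nhds (isOpen_ball.eventually_mem hz)] with w hw1 hw2
      exact hball w hw2 hw1
    exact le_of_tendsto ((hcont.continuousWithinAt.norm).tendsto) hev
  · exact hball z hz hzq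

lemma peel_zero_of_ne {g : ℂ → ℂ} {q c : ℂ} (hc : c ≠ q) (hq0 : g q = 0) (h0 : g c = 0) :
    peelFun q g c = 0 := by
  rw [peelFun, dslope_of_ne _ hc, slope_def_field, h0, hq0]
  simp

lemma peel_at_zero {g : ℂ → ℂ} {q : ℂ} (hq0 : q ≠ 0) (h0 : g q = 0) :
    ‖g 0‖ = ‖q‖ * ‖peelFun q g 0‖ := by
  rw [peelFun, dslope_of_ne _ (Ne.symm hq0), slope_def_field, h0]
  rw [mul_zero, sub_zero, one_mul, sub_zero, zero_sub, norm_div, norm_neg,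
    mul_div_cancel₀ _ (norm_ne_zero_iff.mpr hq0)]

lemma zero_of_ordO {g : ℂ → ℂ} {q : ℂ} {k : ℕ} (hk : 0 < k)
    (hcont : ContinuousAt g q) (hO : g =O[𝓝 q] fun z => ‖z - q‖ ^ k) : g q = 0 := by
  have h2 : Tendsto (fun z : ℂ => ‖z - q‖ ^ k) (𝓝 q) (𝓝 0) := by
    have hc : ContinuousAt (fun z : ℂ => ‖z - q‖ ^ k) q := by fun_prop
    have := hc.tendsto
    simpa [sub_self, zero_pow hk.ne'] using this
  exact tendsto_nhds_unique hcont.tendsto (hO.trans_tendsto h2)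

lemma peel_ord2 {g : ℂ → ℂ} {q : ℂ} (hq : ‖q‖ < 1)
    (hd : DifferentiableOn ℂ g (ball 0 1))
    (hO : g =O[𝓝 q] fun z => ‖z - q‖ ^ 2) : peelFun q g q = 0 := by
  have hqm : q ∈ ball (0:ℂ) 1 := mem_ball_zero_iff.mpr hq
  have hdsl : DifferentiableOn ℂ (dslope g q) (ball 0 1) :=
    (Complex.differentiableOn_dslope (isOpen_ball.mem_nhds hqm)).mpr hd
  have hc : ContinuousAt (dslope g q) q :=
    ((hdsl q hqm).differentiableAt (isOpen_ball.mem_nhds hqm)).continuousAt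
  obtain ⟨C, hC⟩ := hO.bound
  have hpunct : Tendsto (dslope g q) (𝓝[≠] q) (𝓝 0) := by
    apply squeeze_zero_norm' (a := fun z => C * ‖z - q‖)
    · filter_upwards [eventually_nhdsWithin_of_eventually_nhds hC,
        self_mem_nhdsWithin] with z hz hzq
      have hzq' : z - q ≠ 0 := sub_ne_zero.mpr hzq
      rw [dslope_of_ne _ hzq, slope_def_field, norm_div]
      rw [div_le_iff₀ (norm_pos_iff.mpr hzq')]
      have : ‖g z - g q‖ ≤ ‖g z‖ + ‖g q‖ := norm_sub_le _ _
      have hgq : g q = 0 := by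
        apply zero_of_ordO (k := 2) (by norm_num) ?_ hO
        exact ((hd q hqm).differentiableAt (isOpen_ball.mem_nhds hqm)).continuousAt
      rw [hgq, sub_zero]
      calc ‖g z‖ ≤ C * ‖‖z - q‖ ^ 2‖ := hz
      _ = C * ‖z - q‖ * ‖z - q‖ := by
          rw [norm_pow, norm_norm]; ring
    · have hcc : ContinuousAt (fun z : ℂ => C * ‖z - q‖) q := by fun_prop
      have := hcc.tendsto.mono_left (nhdsWithin_le_nhds (s := {q}ᶜ))
      simpa [sub_self] using this
  have hval : dslope g q q = 0 :=
    tendsto_nhds_unique (hc.tendsto.mono_left nhdsWithin_le_nhds) hpunct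
  rw [peelFun, hval, mul_zero]

lemma peel_ordO_ne {g : ℂ → ℂ} {q c : ℂ} {k : ℕ} (hc : c ≠ q) (hq0 : g q = 0)
    (hO : g =O[𝓝 c] fun z => ‖z - c‖ ^ k) :
    peelFun q g =O[𝓝 c] fun z => ‖z - c‖ ^ k := by
  have hu : ContinuousAt (fun z : ℂ => (1 - (starRingEnd ℂ) q * z) / (z - q)) c := by
    apply ContinuousAt.div
    · fun_prop
    · fun_prop
    · exact sub_ne_zero.mpr hc
  have hu1 : (fun z : ℂ => (1 - (starRingEnd ℂ) q * z) / (z - q)) =O[𝓝 c]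
      (fun _ : ℂ => (1:ℝ)) := hu.tendsto.isBigO_one (F := ℝ)
  have hev : (fun z => ((1 - (starRingEnd ℂ) q * z) / (z - q)) * g z) =ᶠ[𝓝 c] peelFun q g := by
    have hopen : ∀ᶠ z in 𝓝 c, z ≠ q := isOpen_compl_singleton.eventually_mem hc
    filter_upwards [hopen] with z hz
    rw [peelFun, dslope_of_ne _ hz, slope_def_field, hq0, sub_zero]
    ring
  refine ((hu1.mul hO).congr' hev ?_)
  filter_upwards with z
  rw [one_mul]

lemma contAt {g : ℂ → ℂ} (hd : DifferentiableOn ℂ g (ball 0 1)) {q : ℂ} (hq : ‖q‖ < 1) :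
    ContinuousAt g q := by
  have hqm : q ∈ ball (0:ℂ) 1 := mem_ball_zero_iff.mpr hq
  exact ((hd q hqm).differentiableAt (isOpen_ball.mem_nhds hqm)).continuousAt

lemma chain1 {g : ℂ → ℂ} {u : ℂ} (hu : ‖u‖ < 1) (hu0 : u ≠ 0)
    (hd : DifferentiableOn ℂ g (ball 0 1)) (hb : ∀ z ∈ ball (0:ℂ) 1, ‖g z‖ ≤ 1)
    (h : g u = 0) : ‖g 0‖ ≤ ‖u‖ := by
  rw [peel_at_zero hu0 h]
  have hb' := peel_bound hu hd hb h 0 (by simp)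
  calc ‖u‖ * ‖peelFun u g 0‖ ≤ ‖u‖ * 1 := by
        have := norm_nonneg u; nlinarith
  _ = ‖u‖ := mul_one _

lemma chain11 {g : ℂ → ℂ} {u v : ℂ} (hu : ‖u‖ < 1) (hv : ‖v‖ < 1)
    (hu0 : u ≠ 0) (hv0 : v ≠ 0) (hvu : v ≠ u)
    (hd : DifferentiableOn ℂ g (ball 0 1)) (hb : ∀ z ∈ ball (0:ℂ) 1, ‖g z‖ ≤ 1)
    (h1 : g u = 0) (h2 : g v = 0) : ‖g 0‖ ≤ ‖u‖ * ‖v‖ := by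
  rw [peel_at_zero hu0 h1]
  have hd' := peel_diff hu hd
  have hb' := peel_bound hu hd hb h1
  have h2' : peelFun u g v = 0 := peel_zero_of_ne hvu h1 h2
  have := chain1 hv hv0 hd' hb' h2'
  have hn := norm_nonneg u
  nlinarith

lemma chain111 {g : ℂ → ℂ} {u v w : ℂ} (hu : ‖u‖ < 1) (hv : ‖v‖ < 1) (hw : ‖w‖ < 1)
    (hu0 : u ≠ 0) (hv0 : v ≠ 0) (hw0 : w ≠ 0) (hvu : v ≠ u) (hwu : w ≠ u) (hwv : w ≠ v)
    (hd : DifferentiableOn ℂ g (ball 0 1)) (hb : ∀ z ∈ ball (0:ℂ) 1, ‖g z‖ ≤ 1)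
    (h1 : g u = 0) (h2 : g v = 0) (h3 : g w = 0) : ‖g 0‖ ≤ ‖u‖ * ‖v‖ * ‖w‖ := by
  rw [peel_at_zero hu0 h1]
  have hd' := peel_diff hu hd
  have hb' := peel_bound hu hd hb h1
  have h2' : peelFun u g v = 0 := peel_zero_of_ne hvu h1 h2
  have h3' : peelFun u g w = 0 := peel_zero_of_ne hwu h1 h3
  have := chain11 hv hw hv0 hw0 hwv hd' hb' h2' h3'
  have hn := norm_nonneg u
  nlinarith

lemma chain21 {g : ℂ → ℂ} {v w : ℂ} (hv : ‖v‖ < 1) (hw : ‖w‖ < 1)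
    (hv0 : v ≠ 0) (hw0 : w ≠ 0) (hwv : w ≠ v)
    (hd : DifferentiableOn ℂ g (ball 0 1)) (hb : ∀ z ∈ ball (0:ℂ) 1, ‖g z‖ ≤ 1)
    (hOv : g =O[𝓝 v] fun z => ‖z - v‖ ^ 2) (h3 : g w = 0) :
    ‖g 0‖ ≤ ‖v‖ * ‖v‖ * ‖w‖ := by
  have h1 : g v = 0 := zero_of_ordO (by norm_num) (contAt hd hv) hOv
  rw [peel_at_zero hv0 h1]
  have hd' := peel_diff hv hd
  have hb' := peel_bound hv hd hb h1
  have h1' : peelFun v g v = 0 := peel_ord2 hv hd hOv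
  have h3' : peelFun v g w = 0 := peel_zero_of_ne hwv h1 h3
  have := chain11 hv hw hv0 hw0 hwv hd' hb' h1' h3'
  have hn := norm_nonneg v
  nlinarith

lemma chain221 {g : ℂ → ℂ} {u v w : ℂ} (hu : ‖u‖ < 1) (hv : ‖v‖ < 1) (hw : ‖w‖ < 1)
    (hu0 : u ≠ 0) (hv0 : v ≠ 0) (hw0 : w ≠ 0) (hvu : v ≠ u) (hwu : w ≠ u) (hwv : w ≠ v)
    (hd : DifferentiableOn ℂ g (ball 0 1)) (hb : ∀ z ∈ ball (0:ℂ) 1, ‖g z‖ ≤ 1)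
    (hOu : g =O[𝓝 u] fun z => ‖z - u‖ ^ 2) (hOv : g =O[𝓝 v] fun z => ‖z - v‖ ^ 2)
    (h3 : g w = 0) : ‖g 0‖ ≤ ‖u‖ * ‖u‖ * (‖v‖ * ‖v‖ * ‖w‖) := by
  have h1 : g u = 0 := zero_of_ordO (by norm_num) (contAt hd hu) hOu
  rw [peel_at_zero hu0 h1]
  set g1 := peelFun u g with hg1
  have hd1 := peel_diff hu hd
  have hb1 := peel_bound hu hd hb h1
  have h1u : g1 u = 0 := peel_ord2 hu hd hOu
  have h1Ov : g1 =O[𝓝 v] fun z => ‖z - v‖ ^ 2 := peel_ordO_ne hvu h1 hOv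
  have h1w : g1 w = 0 := peel_zero_of_ne hwu h1 h3
  rw [peel_at_zero hu0 h1u]
  set g2 := peelFun u g1 with hg2
  have hd2 := peel_diff hu hd1
  have hb2 := peel_bound hu hd1 hb1 h1u
  have h2Ov : g2 =O[𝓝 v] fun z => ‖z - v‖ ^ 2 := peel_ordO_ne hvu h1u h1Ov
  have h2w : g2 w = 0 := peel_zero_of_ne hwu h1u h1w
  have := chain21 hv hw hv0 hw0 hwv hd2 hb2 h2Ov h2w
  have hn := norm_nonneg u
  nlinarith [norm_nonneg (g2 0), norm_nonneg v, norm_nonneg w, this]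

/-! ### Explicit data -/

def q1 : ℂ := ⟨-1/8, Real.sqrt 31 / 8⟩

lemma s31 : Real.sqrt 31 ^ 2 = 31 := Real.sq_sqrt (by norm_num)

lemma s31pos : 0 < Real.sqrt 31 := Real.sqrt_pos.mpr (by norm_num)

lemma normSq_q1 : Complex.normSq q1 = 1/2 := by
  rw [Complex.normSq_apply]
  show (-1/8 : ℝ) * (-1/8) + Real.sqrt 31 / 8 * (Real.sqrt 31 / 8) = 1/2
  nlinarith [s31]

lemma norm_q1_sq : ‖q1‖ * ‖q1‖ = 1/2 := by
  have : ‖q1‖ ^ 2 = Complex.normSq q1 := by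
    rw [Complex.sq_norm]
  rw [← normSq_q1, ← this]; ring

lemma norm_q1_lt : ‖q1‖ < 1 := by
  nlinarith [norm_q1_sq, norm_nonneg q1]

lemma norm_cq1 : ‖(starRingEnd ℂ) q1‖ = ‖q1‖ := RCLike.norm_conj q1

lemma norm_cq1_lt : ‖(starRingEnd ℂ) q1‖ < 1 := by rw [norm_cq1]; exact norm_q1_lt

lemma im_q1 : q1.im = Real.sqrt 31 / 8 := rfl

lemma q1_ne_zero : q1 ≠ 0 := by
  intro h
  have h2 := congrArg Complex.im h
  rw [im_q1, Complex.zero_im] at h2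
  nlinarith [s31pos]

lemma cq1_ne_zero : (starRingEnd ℂ) q1 ≠ 0 := by
  simpa using q1_ne_zero

lemma cq1_ne_q1 : (starRingEnd ℂ) q1 ≠ q1 := by
  intro h
  have h2 := congrArg Complex.im h
  rw [Complex.conj_im, im_q1] at h2
  nlinarith [s31pos]

lemma twothirds_eq : (2/3 : ℂ) = ((2/3 : ℝ) : ℂ) := by norm_num

lemma twothirds_ne_q1 : (2/3 : ℂ) ≠ q1 := by
  intro h
  rw [twothirds_eq] at h
  have h2 := congrArg Complex.im h
  rw [Complex.ofReal_im, im_q1] at h2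
  nlinarith [s31pos]

lemma twothirds_ne_cq1 : (2/3 : ℂ) ≠ (starRingEnd ℂ) q1 := by
  intro h
  rw [twothirds_eq] at h
  have h2 := congrArg Complex.im h
  rw [Complex.ofReal_im, Complex.conj_im, im_q1] at h2
  nlinarith [s31pos]

lemma twothirds_ne_zero : (2/3 : ℂ) ≠ 0 := by norm_num

lemma norm_twothirds : ‖(2/3 : ℂ)‖ = 2/3 := by
  rw [show (2/3 : ℂ) = ((2/3 : ℝ) : ℂ) by norm_num, Complex.norm_real]
  rw [Real.norm_of_nonneg] <;> norm_num

lemma norm_twothirds_lt : ‖(2/3 : ℂ)‖ < 1 := by rw [norm_twothirds]; norm_num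

lemma quad_q1 : 4 * q1 ^ 2 + q1 + 2 = 0 := by
  have h : q1 ^ 2 = ⟨-15/32, -Real.sqrt 31/32⟩ := by
    rw [pow_two]
    apply Complex.ext
    · show q1.re * q1.re - q1.im * q1.im = -15/32
      show (-1/8 : ℝ) * (-1/8) - Real.sqrt 31 / 8 * (Real.sqrt 31 / 8) = -15/32
      nlinarith [s31]
    · show q1.re * q1.im + q1.im * q1.re = -Real.sqrt 31/32
      show (-1/8 : ℝ) * (Real.sqrt 31 / 8) + Real.sqrt 31 / 8 * (-1/8) = -Real.sqrt 31/32
      ring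
  rw [h]
  apply Complex.ext
  · simp [q1, Complex.add_re, Complex.mul_re]
    norm_num
  · simp [q1, Complex.add_im, Complex.mul_im]
    ring

lemma quad_cq1 : 4 * ((starRingEnd ℂ) q1) ^ 2 + (starRingEnd ℂ) q1 + 2 = 0 := by
  have h := congrArg (starRingEnd ℂ) quad_q1
  simp only [map_add, map_mul, map_pow, map_ofNat, map_zero] at h
  exact h

/-! ### the analytic discs -/

def sig : ℂ → ℂ := fun z => z * mob (-(1/6)) z

def tau : ℂ → ℂ := fun z => -(mob q1 z * mob ((starRingEnd ℂ) q1) z * mob (2/3) z)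

lemma norm_sixth_lt : ‖(-(1/6) : ℂ)‖ < 1 := by
  rw [norm_neg, show ((1/6 : ℂ)) = ((1/6 : ℝ) : ℂ) by norm_num, Complex.norm_real]
  rw [Real.norm_of_nonneg] <;> norm_num

lemma sig_diff : DifferentiableOn ℂ sig (ball 0 1) :=
  differentiableOn_id.mul (mob_differentiableOn norm_sixth_lt)

lemma sig_maps {z : ℂ} (hz : ‖z‖ < 1) : ‖sig z‖ < 1 := by
  rw [sig, norm_mul]
  have h1 := norm_mob_lt norm_sixth_lt hz
  have h2 := norm_nonneg z
  have h3 := norm_nonneg (mob (-(1/6)) z)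
  nlinarith

lemma sig_zero : sig 0 = 0 := by rw [sig, zero_mul]

lemma den_sixth_ne {z : ℂ} (hz : ‖z‖ < 1) : 1 - (starRingEnd ℂ) (-(1/6)) * z ≠ 0 :=
  one_sub_ne norm_sixth_lt hz

lemma conj_sixth : (starRingEnd ℂ) (-(1/6)) = -(1/6) := by
  rw [map_neg, map_div₀, map_one, map_ofNat]

lemma den1 {z : ℂ} (hz : ‖z‖ < 1) : (1 : ℂ) + z / 6 ≠ 0 := by
  have h := den_sixth_ne hz
  rw [conj_sixth] at h
  have h2 : (1 : ℂ) - -(1/6) * z = 1 + z/6 := by ring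
  rw [h2] at h
  exact h

lemma sig_val {z : ℂ} (hz : ‖z‖ < 1) :
    sig z * (1 + z / 6) = z * (z + 1/6) := by
  have hden := den1 hz
  rw [sig, mob, conj_sixth]
  have h2 : (1 : ℂ) - -(1/6) * z = 1 + z/6 := by ring
  rw [h2, sub_neg_eq_add]
  rw [mul_assoc, div_mul_cancel₀ _ hden]

lemma sig_twothirds : sig (2/3) = 1/2 := by
  have h := sig_val norm_twothirds_lt
  linear_combination (9/10 : ℂ) * h

lemma sig_q1 : sig q1 = -(1/2) := by
  have h := sig_val norm_q1_lt
  have key : sig q1 * (1 + q1/6) = (-(1/2)) * (1 + q1/6) := by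
    rw [h]; linear_combination (1/4 : ℂ) * quad_q1
  exact mul_right_cancel₀ (den1 norm_q1_lt) key

lemma sig_cq1 : sig ((starRingEnd ℂ) q1) = -(1/2) := by
  have h := sig_val norm_cq1_lt
  have key : sig ((starRingEnd ℂ) q1) * (1 + (starRingEnd ℂ) q1/6)
      = (-(1/2)) * (1 + (starRingEnd ℂ) q1/6) := by
    rw [h]; linear_combination (1/4 : ℂ) * quad_cq1
  exact mul_right_cancel₀ (den1 norm_cq1_lt) key

lemma tau_diff : DifferentiableOn ℂ tau (ball 0 1) :=
  (((mob_differentiableOn norm_q1_lt).mul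
    (mob_differentiableOn norm_cq1_lt)).mul
    (mob_differentiableOn norm_twothirds_lt)).neg

lemma tau_maps {z : ℂ} (hz : ‖z‖ < 1) : ‖tau z‖ < 1 := by
  rw [tau, norm_neg, norm_mul, norm_mul]
  have h1 := norm_mob_lt norm_q1_lt hz
  have h2 := norm_mob_lt norm_cq1_lt hz
  have h3 := norm_mob_lt norm_twothirds_lt hz
  have n1 := norm_nonneg (mob q1 z)
  have n2 := norm_nonneg (mob ((starRingEnd ℂ) q1) z)
  have n3 := norm_nonneg (mob (2/3) z)
  have h12 : ‖mob q1 z‖ * ‖mob ((starRingEnd ℂ) q1) z‖ < 1 := by nlinarith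
  nlinarith [mul_nonneg n1 n2]

lemma tau_zero : tau 0 = 1/3 := by
  rw [tau, mob_zero, mob_zero, mob_zero]
  have h : -(-q1 * -(starRingEnd ℂ) q1 * -(2/3 : ℂ)) = q1 * (starRingEnd ℂ) q1 * (2/3) := by
    ring
  rw [h, Complex.mul_conj, normSq_q1]
  norm_num

lemma tau_q1 : tau q1 = 0 := by
  rw [tau, mob_self]
  ring

lemma tau_cq1 : tau ((starRingEnd ℂ) q1) = 0 := by
  rw [tau]
  rw [mob_self ((starRingEnd ℂ) q1)]
  ring

lemma tau_twothirds : tau (2/3) = 0 := by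
  rw [tau, mob_self]
  ring

/-! ### the discs as maps to `ℂ²` -/

def Phi : ℂ → (Fin 2 → ℂ) := fun l => ![sig l, tau l]

def Psi : ℂ → (Fin 2 → ℂ) := fun l => ![-(mob (1/2) l), (2/3) * l]

lemma norm_half_lt : ‖(1/2 : ℂ)‖ < 1 := by
  rw [show ((1/2 : ℂ)) = ((1/2 : ℝ) : ℂ) by norm_num, Complex.norm_real]
  rw [Real.norm_of_nonneg] <;> norm_num

lemma norm_half : ‖(1/2 : ℂ)‖ = 1/2 := by
  rw [show ((1/2 : ℂ)) = ((1/2 : ℝ) : ℂ) by norm_num, Complex.norm_real]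
  rw [Real.norm_of_nonneg] <;> norm_num

lemma Phi_zero : Phi 0 = ![0, 1/3] := by
  funext i
  fin_cases i
  · show sig 0 = 0
    exact sig_zero
  · show tau 0 = 1/3
    exact tau_zero

lemma Phi_q1 : Phi q1 = ![-(1/2), 0] := by
  funext i
  fin_cases i
  · show sig q1 = -(1/2)
    exact sig_q1
  · show tau q1 = 0
    exact tau_q1

lemma Phi_cq1 : Phi ((starRingEnd ℂ) q1) = ![-(1/2), 0] := by
  funext i
  fin_cases i
  · show sig ((starRingEnd ℂ) q1) = -(1/2)
    exact sig_cq1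
  · show tau ((starRingEnd ℂ) q1) = 0
    exact tau_cq1

lemma Phi_twothirds : Phi (2/3) = ![1/2, 0] := by
  funext i
  fin_cases i
  · show sig (2/3) = 1/2
    exact sig_twothirds
  · show tau (2/3) = 0
    exact tau_twothirds

lemma Psi_zero : Psi 0 = ![1/2, 0] := by
  funext i
  fin_cases i
  · show -(mob (1/2) 0) = 1/2
    rw [mob_zero]; ring
  · show (2/3 : ℂ) * 0 = 0
    ring

lemma Psi_half : Psi (1/2) = ![0, 1/3] := by
  funext i
  fin_cases i
  · show -(mob (1/2) (1/2)) = 0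
    rw [mob_self]; ring
  · show (2/3 : ℂ) * (1/2) = 1/3
    norm_num

lemma Phi_diff : DifferentiableOn ℂ Phi (ball 0 1) := by
  rw [differentiableOn_pi]
  intro i
  fin_cases i
  · exact sig_diff.congr (fun z _ => rfl)
  · exact tau_diff.congr (fun z _ => rfl)

lemma Psi_diff : DifferentiableOn ℂ Psi (ball 0 1) := by
  rw [differentiableOn_pi]
  intro i
  fin_cases i
  · exact (mob_differentiableOn norm_half_lt).neg.congr (fun z _ => rfl)
  · exact ((differentiable_const (2/3 : ℂ)).mul differentiable_id).differentiableOn.congr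
      (fun z _ => rfl)

/-! ### membership and composition -/

lemma memA : (![-(1/2), 0] : Fin 2 → ℂ) ∈ polyDisc 2 := by
  simp only [polyDisc, Set.mem_setOf_eq]
  intro j
  fin_cases j <;> simp [Matrix.cons_val_zero, Matrix.cons_val_one] <;> norm_num

lemma memB : (![1/2, 0] : Fin 2 → ℂ) ∈ polyDisc 2 := by
  simp only [polyDisc, Set.mem_setOf_eq]
  intro j
  fin_cases j <;> simp [Matrix.cons_val_zero, Matrix.cons_val_one] <;> norm_num

lemma memZ : (![0, 1/3] : Fin 2 → ℂ) ∈ polyDisc 2 := by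
  simp only [polyDisc, Set.mem_setOf_eq]
  intro j
  fin_cases j <;> simp [Matrix.cons_val_zero, Matrix.cons_val_one] <;> norm_num

lemma Phi_maps : MapsTo Phi (ball 0 1) (polyDisc 2) := by
  intro z hz
  have hz' := mem_ball_zero_iff.mp hz
  simp only [polyDisc, Set.mem_setOf_eq]
  intro j
  fin_cases j
  · show ‖sig z‖ < 1
    exact sig_maps hz'
  · show ‖tau z‖ < 1
    exact tau_maps hz'

lemma Psi_maps : MapsTo Psi (ball 0 1) (polyDisc 2) := by
  intro z hz
  have hz' := mem_ball_zero_iff.mp hz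
  simp only [polyDisc, Set.mem_setOf_eq]
  intro j
  fin_cases j
  · show ‖-(mob (1/2) z)‖ < 1
    rw [norm_neg]
    exact norm_mob_lt norm_half_lt hz'
  · show ‖(2/3 : ℂ) * z‖ < 1
    rw [norm_mul, norm_twothirds]
    nlinarith [norm_nonneg z]

lemma comp_diff {f : (Fin 2 → ℂ) → ℂ} {φ : ℂ → (Fin 2 → ℂ)}
    (hd : DifferentiableOn ℂ f (polyDisc 2))
    (hφd : DifferentiableOn ℂ φ (ball 0 1)) (hφm : MapsTo φ (ball 0 1) (polyDisc 2)) :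
    DifferentiableOn ℂ (fun l => f (φ l)) (ball 0 1) :=
  hd.comp hφd hφm

lemma comp_bound {f : (Fin 2 → ℂ) → ℂ} {φ : ℂ → (Fin 2 → ℂ)}
    (hm : MapsTo f (polyDisc 2) discE) (hφm : MapsTo φ (ball 0 1) (polyDisc 2)) :
    ∀ z ∈ ball (0:ℂ) 1, ‖f (φ z)‖ < 1 := by
  intro z hz
  have := hm (hφm hz)
  exact this

lemma comp_ordO {f : (Fin 2 → ℂ) → ℂ} {φ : ℂ → (Fin 2 → ℂ)} {q : ℂ} {a : Fin 2 → ℂ} {k : ℕ}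
    (hφ : DifferentiableAt ℂ φ q) (hφq : φ q = a)
    (hO : f =O[𝓝 a] fun w => ‖w - a‖ ^ k) :
    (fun l => f (φ l)) =O[𝓝 q] fun l => ‖l - q‖ ^ k := by
  have h1 : Tendsto φ (𝓝 q) (𝓝 a) := hφq ▸ hφ.continuousAt.tendsto
  have h2 := hO.comp_tendsto h1
  have h3 : (fun l => φ l - a) =O[𝓝 q] fun l => l - q := by
    simpa [hφq] using hφ.isBigO_sub
  exact h2.trans ((h3.norm_norm).pow k)

lemma Phi_diffAt {q : ℂ} (hq : ‖q‖ < 1) : DifferentiableAt ℂ Phi q :=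
  Phi_diff.differentiableAt (isOpen_ball.mem_nhds (mem_ball_zero_iff.mpr hq))

lemma Psi_diffAt {q : ℂ} (hq : ‖q‖ < 1) : DifferentiableAt ℂ Psi q :=
  Psi_diff.differentiableAt (isOpen_ball.mem_nhds (mem_ball_zero_iff.mpr hq))

/-! ### the four main estimates -/

lemma m_upper {f : (Fin 2 → ℂ) → ℂ} (hd : DifferentiableOn ℂ f (polyDisc 2))
    (hm : MapsTo f (polyDisc 2) discE)
    (hO2 : OrdGE f ![-(1/2), 0] 2) (hO1 : OrdGE f ![1/2, 0] 1) :
    ‖f ![0, 1/3]‖ ≤ 1/6 := by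
  set g : ℂ → ℂ := fun l => f (Phi l) with hg
  have hgd : DifferentiableOn ℂ g (ball 0 1) := comp_diff hd Phi_diff Phi_maps
  have hgb : ∀ z ∈ ball (0:ℂ) 1, ‖g z‖ ≤ 1 := fun z hz =>
    (comp_bound hm Phi_maps z hz).le
  have hOu : g =O[𝓝 q1] fun l => ‖l - q1‖ ^ 2 :=
    comp_ordO (Phi_diffAt norm_q1_lt) Phi_q1 hO2
  have hOv : g =O[𝓝 ((starRingEnd ℂ) q1)] fun l => ‖l - (starRingEnd ℂ) q1‖ ^ 2 :=
    comp_ordO (Phi_diffAt norm_cq1_lt) Phi_cq1 hO2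
  have hOw : g =O[𝓝 (2/3 : ℂ)] fun l => ‖l - (2/3 : ℂ)‖ ^ 1 :=
    comp_ordO (Phi_diffAt norm_twothirds_lt) Phi_twothirds hO1
  have h3 : g (2/3) = 0 :=
    zero_of_ordO (by norm_num) (contAt hgd norm_twothirds_lt) hOw
  have := chain221 norm_q1_lt norm_cq1_lt norm_twothirds_lt q1_ne_zero cq1_ne_zero
    twothirds_ne_zero cq1_ne_q1 twothirds_ne_q1 twothirds_ne_cq1 hgd hgb hOu hOv h3
  have hg0 : g 0 = f ![0, 1/3] := by rw [hg]; simp only []; rw [Phi_zero]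
  rw [hg0] at this
  calc ‖f ![0, 1/3]‖ ≤ ‖q1‖ * ‖q1‖ * (‖(starRingEnd ℂ) q1‖ * ‖(starRingEnd ℂ) q1‖
      * ‖(2/3 : ℂ)‖) := this
  _ = 1/6 := by
      rw [norm_cq1, norm_q1_sq, norm_twothirds]
      norm_num

lemma b_bound {f : (Fin 2 → ℂ) → ℂ} (hd : DifferentiableOn ℂ f (polyDisc 2))
    (hm : MapsTo f (polyDisc 2) discE) (hz : f ![0, 1/3] = 0) :
    ‖f ![1/2, 0]‖ ≤ 1/2 := by
  set g : ℂ → ℂ := fun l => f (Psi l) with hg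
  have hgd : DifferentiableOn ℂ g (ball 0 1) := comp_diff hd Psi_diff Psi_maps
  have hgb : ∀ z ∈ ball (0:ℂ) 1, ‖g z‖ ≤ 1 := fun z hz =>
    (comp_bound hm Psi_maps z hz).le
  have h1 : g (1/2) = 0 := by rw [hg]; simp only []; rw [Psi_half, hz]
  have := chain1 norm_half_lt (by norm_num) hgd hgb h1
  have hg0 : g 0 = f ![1/2, 0] := by rw [hg]; simp only []; rw [Psi_zero]
  rw [hg0, norm_half] at this
  exact this

lemma a_bound {f : (Fin 2 → ℂ) → ℂ} (hd : DifferentiableOn ℂ f (polyDisc 2))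
    (hm : MapsTo f (polyDisc 2) discE) (hz : f ![0, 1/3] = 0) :
    ‖f ![-(1/2), 0]‖ ≤ 1/2 := by
  set μ : ℂ := f ![-(1/2), 0] with hμdef
  have hμ : ‖μ‖ < 1 := by
    exact hm memA
  set G : ℂ → ℂ := fun l => mob μ (f (Phi l)) with hG
  have hgd : DifferentiableOn ℂ (fun l => f (Phi l)) (ball 0 1) :=
    comp_diff hd Phi_diff Phi_maps
  have hgm : MapsTo (fun l => f (Phi l)) (ball 0 1) (ball 0 1) := by
    intro z hz2
    exact mem_ball_zero_iff.mpr (comp_bound hm Phi_maps z hz2)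
  have hGd : DifferentiableOn ℂ G (ball 0 1) :=
    (mob_differentiableOn hμ).comp hgd hgm
  have hGb : ∀ z ∈ ball (0:ℂ) 1, ‖G z‖ ≤ 1 := by
    intro z hz2
    exact (norm_mob_lt hμ (mem_ball_zero_iff.mp (hgm hz2))).le
  have h1 : G q1 = 0 := by
    rw [hG]; simp only []; rw [Phi_q1, ← hμdef, mob_self]
  have h2 : G ((starRingEnd ℂ) q1) = 0 := by
    rw [hG]; simp only []; rw [Phi_cq1, ← hμdef, mob_self]
  have := chain11 norm_q1_lt norm_cq1_lt q1_ne_zero cq1_ne_zero cq1_ne_q1 hGd hGb h1 h2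
  have hG0 : G 0 = -μ := by
    rw [hG]; simp only []; rw [Phi_zero, hz, mob_zero]
  rw [hG0, norm_neg] at this
  calc ‖μ‖ ≤ ‖q1‖ * ‖(starRingEnd ℂ) q1‖ := this
  _ = 1/2 := by rw [norm_cq1, norm_q1_sq]

lemma eq_bound {f : (Fin 2 → ℂ) → ℂ} (hd : DifferentiableOn ℂ f (polyDisc 2))
    (hm : MapsTo f (polyDisc 2) discE) (hz : f ![0, 1/3] = 0)
    (heq : f ![-(1/2), 0] = f ![1/2, 0]) :
    ‖f ![-(1/2), 0]‖ ≤ 1/3 := by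
  set μ : ℂ := f ![-(1/2), 0] with hμdef
  have hμ : ‖μ‖ < 1 := by
    exact hm memA
  set G : ℂ → ℂ := fun l => mob μ (f (Phi l)) with hG
  have hgd : DifferentiableOn ℂ (fun l => f (Phi l)) (ball 0 1) :=
    comp_diff hd Phi_diff Phi_maps
  have hgm : MapsTo (fun l => f (Phi l)) (ball 0 1) (ball 0 1) := by
    intro z hz2
    exact mem_ball_zero_iff.mpr (comp_bound hm Phi_maps z hz2)
  have hGd : DifferentiableOn ℂ G (ball 0 1) :=
    (mob_differentiableOn hμ).comp hgd hgm
  have hGb : ∀ z ∈ ball (0:ℂ) 1, ‖G z‖ ≤ 1 := by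
    intro z hz2
    exact (norm_mob_lt hμ (mem_ball_zero_iff.mp (hgm hz2))).le
  have h1 : G q1 = 0 := by
    rw [hG]; simp only []; rw [Phi_q1, ← hμdef, mob_self]
  have h2 : G ((starRingEnd ℂ) q1) = 0 := by
    rw [hG]; simp only []; rw [Phi_cq1, ← hμdef, mob_self]
  have h3 : G (2/3) = 0 := by
    rw [hG]; simp only []; rw [Phi_twothirds, ← heq]
    exact mob_self μ
  have := chain111 norm_q1_lt norm_cq1_lt norm_twothirds_lt q1_ne_zero cq1_ne_zero
    twothirds_ne_zero cq1_ne_q1 twothirds_ne_q1 twothirds_ne_cq1 hGd hGb h1 h2 h3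
  have hG0 : G 0 = -μ := by
    rw [hG]; simp only []; rw [Phi_zero, hz, mob_zero]
  rw [hG0, norm_neg] at this
  calc ‖μ‖ ≤ ‖q1‖ * ‖(starRingEnd ℂ) q1‖ * ‖(2/3:ℂ)‖ := this
  _ = 1/3 := by rw [norm_cq1, norm_q1_sq, norm_twothirds]; norm_num

/-! ### the extremal competitor for the lower bound -/

def f0 : (Fin 2 → ℂ) → ℂ := fun z => mob (-(1/2)) (z 0) * z 1

lemma norm_neg_half_lt : ‖(-(1/2) : ℂ)‖ < 1 := by
  rw [norm_neg]; exact norm_half_lt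

lemma proj_diff (i : Fin 2) : Differentiable ℂ (fun z : Fin 2 → ℂ => z i) :=
  (ContinuousLinearMap.proj (R := ℂ) (φ := fun _ : Fin 2 => ℂ) i).differentiable

lemma isBigO_sub_of_zero {F : (Fin 2 → ℂ) → ℂ} {A : Fin 2 → ℂ}
    (hd : DifferentiableAt ℂ F A) (h0 : F A = 0) :
    F =O[𝓝 A] fun z => ‖z - A‖ := by
  have hsub := hd.isBigO_sub
  have h1 : F =O[𝓝 A] fun z => z - A := by
    refine hsub.congr' ?_ EventuallyEq.rfl
    filter_upwards with z
    rw [h0, sub_zero]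
  exact h1.norm_right

lemma mem_ball_of_polyDisc {z : Fin 2 → ℂ} (hz : z ∈ polyDisc 2) (i : Fin 2) :
    z i ∈ ball (0:ℂ) 1 := by
  rw [mem_ball_zero_iff]
  exact hz i

lemma f0_diff : DifferentiableOn ℂ f0 (polyDisc 2) := by
  apply DifferentiableOn.mul
  · exact (mob_differentiableOn norm_neg_half_lt).comp ((proj_diff 0).differentiableOn)
      (fun z hz => mem_ball_of_polyDisc hz 0)
  · exact (proj_diff 1).differentiableOn

lemma f0_maps : MapsTo f0 (polyDisc 2) discE := by
  intro z hz
  show ‖mob (-(1/2)) (z 0) * z 1‖ < 1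
  rw [norm_mul]
  have h1 := norm_mob_lt norm_neg_half_lt (mem_ball_zero_iff.mp (mem_ball_of_polyDisc hz 0))
  have h2 := mem_ball_zero_iff.mp (mem_ball_of_polyDisc hz 1)
  have n1 := norm_nonneg (mob (-(1/2)) (z 0))
  have n2 := norm_nonneg (z 1)
  nlinarith

lemma f0_val : f0 ![0, 1/3] = 1/6 := by
  show mob (-(1/2)) ((![0, 1/3] : Fin 2 → ℂ) 0) * (![0, 1/3] : Fin 2 → ℂ) 1 = 1/6
  have h0 : (![0, 1/3] : Fin 2 → ℂ) 0 = 0 := rfl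
  have h1 : (![0, 1/3] : Fin 2 → ℂ) 1 = 1/3 := rfl
  rw [h0, h1, mob_zero]
  norm_num

lemma f0_ord_A : OrdGE f0 ![-(1/2), 0] 2 := by
  set A : Fin 2 → ℂ := ![-(1/2), 0] with hA
  have hA0 : A 0 = -(1/2) := rfl
  have hA1 : A 1 = 0 := rfl
  have hmem : A 0 ∈ ball (0:ℂ) 1 := by
    rw [mem_ball_zero_iff, hA0]; exact norm_neg_half_lt
  have hd1 : DifferentiableAt ℂ (fun z : Fin 2 → ℂ => mob (-(1/2)) (z 0)) A := by
    have := (mob_differentiableOn norm_neg_half_lt).differentiableAt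
      (isOpen_ball.mem_nhds hmem)
    exact this.comp A (proj_diff 0 A)
  have h1 : (fun z : Fin 2 → ℂ => mob (-(1/2)) (z 0)) =O[𝓝 A] fun z => ‖z - A‖ := by
    apply isBigO_sub_of_zero hd1
    show mob (-(1/2)) (A 0) = 0
    rw [hA0]; exact mob_self _
  have h2 : (fun z : Fin 2 → ℂ => z 1) =O[𝓝 A] fun z => ‖z - A‖ := by
    apply isBigO_sub_of_zero (proj_diff 1 A)
    exact hA1
  have := h1.mul h2
  rw [OrdGE]
  refine this.congr (fun z => rfl) (fun z => ?_)
  rw [pow_two]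

lemma f0_ord_B : OrdGE f0 ![1/2, 0] 1 := by
  set B : Fin 2 → ℂ := ![1/2, 0] with hB
  have hB0 : B 0 = 1/2 := rfl
  have hB1 : B 1 = 0 := rfl
  have hmem : B 0 ∈ ball (0:ℂ) 1 := by
    rw [mem_ball_zero_iff, hB0]; exact norm_half_lt
  have h1 : (fun z : Fin 2 → ℂ => mob (-(1/2)) (z 0)) =O[𝓝 B] (fun _ => (1:ℝ)) := by
    have hc : ContinuousAt (fun z : Fin 2 → ℂ => mob (-(1/2)) (z 0)) B := by
      have := (mob_differentiableOn norm_neg_half_lt).differentiableAt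
        (isOpen_ball.mem_nhds hmem)
      exact (this.comp B (proj_diff 0 B)).continuousAt
    exact hc.tendsto.isBigO_one (F := ℝ)
  have h2 : (fun z : Fin 2 → ℂ => z 1) =O[𝓝 B] fun z => ‖z - B‖ := by
    apply isBigO_sub_of_zero (proj_diff 1 B)
    exact hB1
  have := h1.mul h2
  rw [OrdGE]
  refine this.congr (fun z => rfl) (fun z => ?_)
  rw [pow_one, one_mul]

lemma f0_ord_zero {x : Fin 2 → ℂ} (hx : x ∈ polyDisc 2) : OrdGE f0 x 0 := by
  have hc : ContinuousAt f0 x := by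
    have h1 : ContinuousAt (fun z : Fin 2 → ℂ => mob (-(1/2)) (z 0)) x := by
      have := (mob_differentiableOn norm_neg_half_lt).differentiableAt
        (isOpen_ball.mem_nhds (mem_ball_of_polyDisc hx 0))
      exact (this.comp x (proj_diff 0 x)).continuousAt
    exact h1.mul (proj_diff 1 x).continuousAt
  rw [OrdGE]
  have := hc.tendsto.isBigO_one (F := ℝ)
  refine this.congr (fun z => rfl) (fun z => ?_)
  rw [pow_zero]

/-! ### assembly -/

section Assembly

variable {p : (Fin 2 → ℂ) → ℕ}
  (hp1 : p ![-(1/2), 0] = 2) (hp2 : p ![1/2, 0] = 1)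
  (hp0 : ∀ x : Fin 2 → ℂ, x ≠ ![-(1/2), 0] → x ≠ ![1/2, 0] → p x = 0)

include hp1 hp2 hp0

lemma p_le_two : ∀ x, p x ≤ 2 := by
  intro x
  by_cases hA : x = ![-(1/2), 0]
  · rw [hA, hp1]
  by_cases hB : x = ![1/2, 0]
  · rw [hB, hp2]; norm_num
  · rw [hp0 x hA hB]; norm_num

lemma fiberSup_le_two (f : (Fin 2 → ℂ) → ℂ) (μ : ℂ) :
    fiberSup (polyDisc 2) (fun a => (p a : ℝ)) f μ ≤ 2 := by
  rw [fiberSup]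
  apply iSup₂_le
  intro x _
  calc ENNReal.ofReal ((p x : ℝ)) ≤ ENNReal.ofReal 2 := by
        apply ENNReal.ofReal_le_ofReal
        exact_mod_cast p_le_two hp1 hp2 hp0 x
  _ = 2 := by norm_num

lemma fiberSup_A (f : (Fin 2 → ℂ) → ℂ) :
    fiberSup (polyDisc 2) (fun a => (p a : ℝ)) f (f ![-(1/2), 0]) = 2 := by
  apply le_antisymm (fiberSup_le_two hp1 hp2 hp0 f _)
  have hmem : (![-(1/2), 0] : Fin 2 → ℂ) ∈
      {a ∈ polyDisc 2 | f a = f ![-(1/2), 0]} := ⟨memA, rfl⟩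
  have := le_biSup (f := fun a : Fin 2 → ℂ => ENNReal.ofReal ((p a : ℝ))) hmem
  rw [fiberSup]
  refine le_trans ?_ this
  show (2:ℝ≥0∞) ≤ ENNReal.ofReal ((p ![-(1/2), 0] : ℝ))
  rw [hp1]
  norm_num

lemma fiberSup_B (f : (Fin 2 → ℂ) → ℂ) (hne : f ![-(1/2), 0] ≠ f ![1/2, 0]) :
    fiberSup (polyDisc 2) (fun a => (p a : ℝ)) f (f ![1/2, 0]) = 1 := by
  apply le_antisymm
  · rw [fiberSup]
    apply iSup₂_le
    intro x hx
    have hxA : x ≠ ![-(1/2), 0] := by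
      intro hcon
      apply hne
      rw [← hcon]
      exact hx.2
    have hple : p x ≤ 1 := by
      by_cases hB : x = ![1/2, 0]
      · rw [hB, hp2]
      · rw [hp0 x hxA hB]; norm_num
    calc ENNReal.ofReal ((p x : ℝ)) ≤ ENNReal.ofReal 1 := by
          apply ENNReal.ofReal_le_ofReal
          exact_mod_cast hple
    _ = 1 := by norm_num
  · have hmem : (![1/2, 0] : Fin 2 → ℂ) ∈
        {a ∈ polyDisc 2 | f a = f ![1/2, 0]} := ⟨memB, rfl⟩
    have := le_biSup (f := fun a : Fin 2 → ℂ => ENNReal.ofReal ((p a : ℝ))) hmem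
    rw [fiberSup]
    refine le_trans ?_ this
    show (1:ℝ≥0∞) ≤ ENNReal.ofReal ((p ![1/2, 0] : ℝ))
    rw [hp2]
    norm_num

lemma minTerm_A (f : (Fin 2 → ℂ) → ℂ) :
    minTerm (polyDisc 2) (fun a => (p a : ℝ)) f (f ![-(1/2), 0])
      = ‖f ![-(1/2), 0]‖ ^ (2:ℕ) := by
  rw [minTerm, if_neg, fiberSup_A hp1 hp2 hp0 f]
  · rw [show ((2:ℝ≥0∞)).toReal = ((2:ℕ):ℝ) by norm_num, Real.rpow_natCast]
  · rw [fiberSup_A hp1 hp2 hp0 f]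
    norm_num

lemma minTerm_B (f : (Fin 2 → ℂ) → ℂ) (hne : f ![-(1/2), 0] ≠ f ![1/2, 0]) :
    minTerm (polyDisc 2) (fun a => (p a : ℝ)) f (f ![1/2, 0])
      = ‖f ![1/2, 0]‖ := by
  rw [minTerm, if_neg, fiberSup_B hp1 hp2 hp0 f hne]
  · rw [show ((1:ℝ≥0∞)).toReal = (1:ℝ) by norm_num, Real.rpow_one]
  · rw [fiberSup_B hp1 hp2 hp0 f hne]
    norm_num

omit hp1 hp2 hp0

lemma minTerm_nonneg (G : Set (Fin 2 → ℂ)) (q : (Fin 2 → ℂ) → ℝ) (f : (Fin 2 → ℂ) → ℂ)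
    (μ : ℂ) : 0 ≤ minTerm G q f μ := by
  by_cases h : fiberSup G q f μ = ⊤
  · rw [minTerm, if_pos h]
  · rw [minTerm, if_neg h]
    exact Real.rpow_nonneg (norm_nonneg _) _

lemma infProd_bddBelow (A : Set ℂ) (G : Set (Fin 2 → ℂ)) (q : (Fin 2 → ℂ) → ℝ)
    (f : (Fin 2 → ℂ) → ℂ) :
    BddBelow {r : ℝ | ∃ B : Finset ℂ, ↑B ⊆ A ∧ r = ∏ a ∈ B, minTerm G q f a} := by
  refine ⟨0, ?_⟩
  rintro r ⟨B, _, rfl⟩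
  exact Finset.prod_nonneg fun a _ => minTerm_nonneg G q f a

include hp1 hp2 hp0

lemma dMin_le : dMin (polyDisc 2) (fun a => (p a : ℝ)) ![0, 1/3] ≤ 1/8 := by
  apply Real.sSup_le _ (by norm_num)
  rintro r ⟨f, hd, hm, hz, rfl⟩
  by_cases heq : f ![-(1/2), 0] = f ![1/2, 0]
  · -- use B = {f A}
    have hsub : ↑({f ![-(1/2), 0]} : Finset ℂ) ⊆ f '' polyDisc 2 := by
      intro x hx
      rw [Finset.coe_singleton, Set.mem_singleton_iff] at hx
      exact hx ▸ ⟨_, memA, rfl⟩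
    have hmem : minTerm (polyDisc 2) (fun a => (p a : ℝ)) f (f ![-(1/2), 0]) ∈
        {r : ℝ | ∃ B : Finset ℂ, ↑B ⊆ f '' polyDisc 2 ∧
          r = ∏ a ∈ B, minTerm (polyDisc 2) (fun a => (p a : ℝ)) f a} := by
      exact ⟨{f ![-(1/2), 0]}, hsub, (Finset.prod_singleton _ _).symm⟩
    have hle := csInf_le (infProd_bddBelow _ _ _ _) hmem
    rw [infProd]
    refine le_trans hle ?_
    rw [minTerm_A hp1 hp2 hp0 f]
    have hb := eq_bound hd hm hz heq
    have h0 := norm_nonneg (f ![-(1/2), 0])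
    calc ‖f ![-(1/2), 0]‖ ^ (2:ℕ) ≤ (1/3)^(2:ℕ) := by
          apply pow_le_pow_left₀ h0 hb
    _ ≤ 1/8 := by norm_num
  · -- use B = {f A, f B}
    have hsub : ↑({f ![-(1/2), 0], f ![1/2, 0]} : Finset ℂ) ⊆ f '' polyDisc 2 := by
      intro x hx
      rw [Finset.coe_insert, Set.mem_insert_iff, Finset.coe_singleton,
        Set.mem_singleton_iff] at hx
      rcases hx with rfl | rfl
      · exact ⟨_, memA, rfl⟩
      · exact ⟨_, memB, rfl⟩
    have hmem : (minTerm (polyDisc 2) (fun a => (p a : ℝ)) f (f ![-(1/2), 0]))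
        * (minTerm (polyDisc 2) (fun a => (p a : ℝ)) f (f ![1/2, 0])) ∈
        {r : ℝ | ∃ B : Finset ℂ, ↑B ⊆ f '' polyDisc 2 ∧
          r = ∏ a ∈ B, minTerm (polyDisc 2) (fun a => (p a : ℝ)) f a} :=
      ⟨{f ![-(1/2), 0], f ![1/2, 0]}, hsub, (Finset.prod_pair heq).symm⟩
    have hle := csInf_le (infProd_bddBelow _ _ _ _) hmem
    rw [infProd]
    refine le_trans hle ?_
    rw [minTerm_A hp1 hp2 hp0 f, minTerm_B hp1 hp2 hp0 f heq]
    have ha := a_bound hd hm hz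
    have hb := b_bound hd hm hz
    have h0 := norm_nonneg (f ![-(1/2), 0])
    have h0' := norm_nonneg (f ![1/2, 0])
    nlinarith

lemma mFun_eq : mFun (polyDisc 2) p ![0, 1/3] = 1/6 := by
  apply le_antisymm
  · apply Real.sSup_le _ (by norm_num)
    rintro r ⟨f, hd, hm, hord, rfl⟩
    have o2 := hord _ memA
    rw [hp1] at o2
    have o1 := hord _ memB
    rw [hp2] at o1
    exact m_upper hd hm o2 o1
  · apply le_csSup
    · refine ⟨1, ?_⟩
      rintro r ⟨f, hd, hm, hord, rfl⟩
      exact le_of_lt (hm memZ)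
    · refine ⟨f0, f0_diff, f0_maps, ?_, ?_⟩
      · intro x hx
        by_cases hA : x = ![-(1/2), 0]
        · rw [hA, hp1]
          exact f0_ord_A
        by_cases hB : x = ![1/2, 0]
        · rw [hB, hp2]
          exact f0_ord_B
        · rw [hp0 x hA hB]
          exact f0_ord_zero hx
      · rw [f0_val,
          show ((1/6 : ℂ)) = ((1/6 : ℝ) : ℂ) by norm_num, Complex.norm_real,
          Real.norm_of_nonneg (by norm_num)]

end Assembly

end S14

/-- for the weight `p` with `p(-1/2,0) = 2`, `p(1/2,0) = 1` and `p = 0`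
elsewhere, `d_{E²}^min(p,(0,1/3)) ≤ 1/8 < 1/6 = m_{E²}(p,(0,1/3))`. -/
theorem stmt_14 (p : (Fin 2 → ℂ) → ℕ)
    (hp1 : p ![-(1/2), 0] = 2) (hp2 : p ![1/2, 0] = 1)
    (hp0 : ∀ x : Fin 2 → ℂ, x ≠ ![-(1/2), 0] → x ≠ ![1/2, 0] → p x = 0) :
    dMin (polyDisc 2) (fun a => (p a : ℝ)) ![0, 1/3] ≤ 1/8 ∧
    mFun (polyDisc 2) p ![0, 1/3] = 1/6 ∧
    dMin (polyDisc 2) (fun a => (p a : ℝ)) ![0, 1/3]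
      < mFun (polyDisc 2) p ![0, 1/3] := by
  refine ⟨S14.dMin_le hp1 hp2 hp0, S14.mFun_eq hp1 hp2 hp0, ?_⟩
  have h1 := S14.dMin_le hp1 hp2 hp0
  rw [S14.mFun_eq hp1 hp2 hp0]
  calc dMin (polyDisc 2) (fun a => (p a : ℝ)) ![0, 1/3] ≤ 1/8 := h1
  _ < 1/6 := by norm_num
end
end

section
/- Let G ⊆ ℂⁿ be a domain and let D ⊆ ℂᵐ be a Liouville domain, i.e. every bounded holomorphic function on D is constant. Let p : G×D → ℝ₊ and define p'(z) := sup{p(z,w) : w ∈ D} for z ∈ G. Then d_{G×D}^min(p, (z,w)) = d_G^min(p', z) for all (z,w) ∈ G×D, where d_G^min(p',·) := 0 in case p'(z₀) = +∞ for some z₀ ∈ G. -/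
open Complex Set Filter Asymptotics
open scoped ENNReal

noncomputable section

variable {V W : Type*} [NormedAddCommGroup V] [NormedSpace ℂ V]
  [NormedAddCommGroup W] [NormedSpace ℂ W]

section Aux

lemma ofReal_csSup' {s : Set ℝ} (hne : s.Nonempty) (hb : BddAbove s) :
    ENNReal.ofReal (sSup s) = ⨆ x ∈ s, ENNReal.ofReal x := by
  have h := Monotone.map_csSup_of_continuousAt (f := ENNReal.ofReal)
    ENNReal.continuous_ofReal.continuousAt
    (fun _ _ h => ENNReal.ofReal_le_ofReal h) hne hb
  rw [h, sSup_image]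

lemma minTerm_nonneg {V : Type*} [NormedAddCommGroup V] [NormedSpace ℂ V]
    (G : Set V) (p : V → ℝ) (f : V → ℂ) (μ : ℂ) : 0 ≤ minTerm G p f μ := by
  unfold minTerm
  split
  · exact le_refl 0
  · exact Real.rpow_nonneg (norm_nonneg μ) _

lemma infProd_eq_zero {α : Type*} {A : Set α} {h : α → ℝ} (hnn : ∀ μ, 0 ≤ h μ)
    {μ₀ : α} (hμ₀ : μ₀ ∈ A) (h0 : h μ₀ = 0) : infProd A h = 0 := by
  unfold infProd
  apply le_antisymm
  · apply csInf_le
    · refine ⟨0, ?_⟩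
      rintro r ⟨B, -, rfl⟩
      exact Finset.prod_nonneg fun a _ => hnn a
    · exact ⟨{μ₀}, by simpa using hμ₀, by simp [h0]⟩
  · refine le_csInf ⟨1, ∅, by simp⟩ ?_
    rintro r ⟨B, -, rfl⟩
    exact Finset.prod_nonneg fun a _ => hnn a

lemma iSup_ofReal_top {m : ℕ} {D : Set (Fin m → ℂ)} {q : (Fin m → ℂ) → ℝ}
    (hq : ∀ b, 0 ≤ q b) (hnb : ¬ BddAbove (q '' D)) :
    (⨆ b ∈ D, ENNReal.ofReal (q b)) = ⊤ := by
  by_contra hne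
  apply hnb
  refine ⟨(⨆ b ∈ D, ENNReal.ofReal (q b)).toReal, ?_⟩
  rintro r ⟨b, hb, rfl⟩
  have hle : ENNReal.ofReal (q b) ≤ ⨆ b ∈ D, ENNReal.ofReal (q b) :=
    le_iSup₂ (f := fun b (_ : b ∈ D) => ENNReal.ofReal (q b)) b hb
  calc q b = (ENNReal.ofReal (q b)).toReal := (ENNReal.toReal_ofReal (hq b)).symm
    _ ≤ _ := ENNReal.toReal_mono hne hle

lemma fiberSup_prod {n m : ℕ} {G : Set (Fin n → ℂ)} {D : Set (Fin m → ℂ)}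
    (hDne : D.Nonempty)
    {p : (Fin n → ℂ) × (Fin m → ℂ) → ℝ}
    (hbdd : ∀ x ∈ G, BddAbove ((fun v => p (x, v)) '' D))
    {f : (Fin n → ℂ) × (Fin m → ℂ) → ℂ} {g : (Fin n → ℂ) → ℂ}
    (hconst : ∀ a ∈ G, ∀ b ∈ D, f (a, b) = g a) (μ : ℂ) :
    fiberSup (G ×ˢ D) p f μ
      = fiberSup G (fun x => sSup ((fun v => p (x, v)) '' D)) g μ := by
  unfold fiberSup
  apply le_antisymm
  · refine iSup₂_le ?_
    rintro ⟨a, b⟩ ⟨⟨haG, hbD⟩, hfx⟩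
    have hga : g a = μ := by rw [← hconst a haG b hbD]; exact hfx
    refine le_trans ?_
      (le_iSup₂ (f := fun a (_ : a ∈ {a ∈ G | g a = μ}) =>
        ENNReal.ofReal (sSup ((fun v => p (a, v)) '' D))) a ⟨haG, hga⟩)
    exact ENNReal.ofReal_le_ofReal (le_csSup (hbdd a haG) ⟨b, hbD, rfl⟩)
  · refine iSup₂_le ?_
    rintro a ⟨haG, hga⟩
    rw [ofReal_csSup' (hDne.image _) (hbdd a haG)]
    rw [show ((fun v => p (a, v)) '' D) = (fun v => p (a, v)) '' D from rfl]
    rw [iSup_image]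
    refine iSup₂_le fun b hbD => ?_
    exact le_iSup₂ (f := fun x (_ : x ∈ {x ∈ G ×ˢ D | f x = μ}) =>
      ENNReal.ofReal (p x)) (a, b) ⟨⟨haG, hbD⟩, by rw [hconst a haG b hbD]; exact hga⟩

lemma image_prod_eq {n m : ℕ} {G : Set (Fin n → ℂ)} {D : Set (Fin m → ℂ)}
    {w₀ : Fin m → ℂ} (hw₀ : w₀ ∈ D)
    {f : (Fin n → ℂ) × (Fin m → ℂ) → ℂ} {g : (Fin n → ℂ) → ℂ}
    (hconst : ∀ a ∈ G, ∀ b ∈ D, f (a, b) = g a) :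
    f '' (G ×ˢ D) = g '' G := by
  ext μ
  constructor
  · rintro ⟨⟨a, b⟩, ⟨haG, hbD⟩, rfl⟩
    exact ⟨a, haG, (hconst a haG b hbD).symm⟩
  · rintro ⟨a, haG, rfl⟩
    exact ⟨(a, w₀), ⟨haG, hw₀⟩, hconst a haG w₀ hw₀⟩

end Aux

open scoped Classical

/-- if `D` is a Liouville domain then
`d_{G×D}^min(p,(z,w)) = d_G^min(p',z)` where `p'(z) = sup_{w ∈ D} p(z,w)`
(with the convention `d_G^min(p',·) := 0` if `p'` attains `+∞`). -/
theorem stmt_15 {n m : ℕ} (G : Set (Fin n → ℂ)) (hG : IsDom G)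
    (D : Set (Fin m → ℂ)) (hD : IsDom D)
    (hLiouville : ∀ g : (Fin m → ℂ) → ℂ, DifferentiableOn ℂ g D →
      (∃ C : ℝ, ∀ w ∈ D, ‖g w‖ ≤ C) → ∀ w ∈ D, ∀ w' ∈ D, g w = g w')
    (p : (Fin n → ℂ) × (Fin m → ℂ) → ℝ) (hp : ∀ x, 0 ≤ p x)
    (z : Fin n → ℂ) (hz : z ∈ G) (w : Fin m → ℂ) (hw : w ∈ D) :
    dMin (G ×ˢ D) p (z, w) =
      if ∀ x ∈ G, BddAbove ((fun v => p (x, v)) '' D)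
      then dMin G (fun x => sSup ((fun v => p (x, v)) '' D)) z
      else 0 := by
  classical
  have hDne : D.Nonempty := ⟨w, hw⟩
  split_ifs with hbdd
  · -- bounded case: the two defining sets coincide
    unfold dMin
    congr 1
    ext r
    constructor
    · rintro ⟨f, hf, hmap, hf0, rfl⟩
      set g : (Fin n → ℂ) → ℂ := fun x => f (x, w) with hgdef
      have hconst : ∀ a ∈ G, ∀ b ∈ D, f (a, b) = g a := by
        intro a ha b hb
        have hdiff : DifferentiableOn ℂ (fun y => f (a, y)) D := by
          refine DifferentiableOn.comp hf ?_ ?_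
          · exact ((differentiable_const a).prodMk differentiable_id).differentiableOn
          · exact fun y hy => ⟨ha, hy⟩
        have hbound : ∃ C : ℝ, ∀ y ∈ D, ‖f (a, y)‖ ≤ C :=
          ⟨1, fun y hy => le_of_lt (hmap ⟨ha, hy⟩)⟩
        exact hLiouville _ hdiff hbound b hb w hw
      have hgd : DifferentiableOn ℂ g G := by
        refine DifferentiableOn.comp hf ?_ ?_
        · exact (differentiable_id.prodMk (differentiable_const w)).differentiableOn
        · exact fun x hx => ⟨hx, hw⟩
      have hgmap : MapsTo g G discE := fun x hx => hmap ⟨hx, hw⟩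
      refine ⟨g, hgd, hgmap, hf0, ?_⟩
      have himg : f '' (G ×ˢ D) = g '' G := image_prod_eq hw hconst
      have hmt : minTerm (G ×ˢ D) p f
          = minTerm G (fun x => sSup ((fun v => p (x, v)) '' D)) g := by
        funext μ
        unfold minTerm
        rw [fiberSup_prod hDne hbdd hconst μ]
      rw [himg, hmt]
    · rintro ⟨g, hg, hmap, hg0, rfl⟩
      set f : (Fin n → ℂ) × (Fin m → ℂ) → ℂ := fun x => g x.1 with hfdef
      have hconst : ∀ a ∈ G, ∀ b ∈ D, f (a, b) = g a := fun _ _ _ _ => rfl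
      have hfd : DifferentiableOn ℂ f (G ×ˢ D) := by
        refine DifferentiableOn.comp hg ?_ ?_
        · exact differentiable_fst.differentiableOn
        · exact fun x hx => hx.1
      have hfmap : MapsTo f (G ×ˢ D) discE := fun x hx => hmap hx.1
      refine ⟨f, hfd, hfmap, hg0, ?_⟩
      have himg : f '' (G ×ˢ D) = g '' G := image_prod_eq hw hconst
      have hmt : minTerm (G ×ˢ D) p f
          = minTerm G (fun x => sSup ((fun v => p (x, v)) '' D)) g := by
        funext μ
        unfold minTerm
        rw [fiberSup_prod hDne hbdd hconst μ]
      rw [himg, hmt]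
  · -- unbounded case: the value is 0
    push_neg at hbdd
    obtain ⟨x₀, hx₀G, hx₀⟩ := hbdd
    unfold dMin
    have hset : {r : ℝ | ∃ f : (Fin n → ℂ) × (Fin m → ℂ) → ℂ,
        DifferentiableOn ℂ f (G ×ˢ D) ∧ MapsTo f (G ×ˢ D) discE ∧
        f (z, w) = 0 ∧ r = infProd (f '' (G ×ˢ D)) (minTerm (G ×ˢ D) p f)} = {0} := by
      ext r
      simp only [Set.mem_setOf_eq, Set.mem_singleton_iff]
      constructor
      · rintro ⟨f, hf, hmap, hf0, rfl⟩
        have hconst : ∀ b ∈ D, f (x₀, b) = f (x₀, w) := by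
          intro b hb
          have hdiff : DifferentiableOn ℂ (fun y => f (x₀, y)) D := by
            refine DifferentiableOn.comp hf ?_ ?_
            · exact ((differentiable_const x₀).prodMk differentiable_id).differentiableOn
            · exact fun y hy => ⟨hx₀G, hy⟩
          have hbound : ∃ C : ℝ, ∀ y ∈ D, ‖f (x₀, y)‖ ≤ C :=
            ⟨1, fun y hy => le_of_lt (hmap ⟨hx₀G, hy⟩)⟩
          exact hLiouville _ hdiff hbound b hb w hw
        set μ₀ : ℂ := f (x₀, w) with hμ₀def
        have htop : fiberSup (G ×ˢ D) p f μ₀ = ⊤ := by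
          refine top_unique ?_
          rw [← iSup_ofReal_top (q := fun b => p (x₀, b)) (fun b => hp _) hx₀]
          refine iSup₂_le fun b hb => ?_
          exact le_iSup₂ (f := fun x (_ : x ∈ {x ∈ G ×ˢ D | f x = μ₀}) =>
            ENNReal.ofReal (p x)) (x₀, b) ⟨⟨hx₀G, hb⟩, hconst b hb⟩
        refine infProd_eq_zero (minTerm_nonneg _ _ _) ⟨(x₀, w), ⟨hx₀G, hw⟩, rfl⟩ ?_
        unfold minTerm
        rw [if_pos htop]
      · rintro rfl
        refine ⟨fun _ => 0, differentiableOn_const 0, ?_, rfl, ?_⟩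
        · intro x _
          show ‖(0 : ℂ)‖ < 1
          simp
        · have himg : (fun _ : (Fin n → ℂ) × (Fin m → ℂ) => (0 : ℂ)) '' (G ×ˢ D) = {0} := by
            have hne : (G ×ˢ D).Nonempty := ⟨(z, w), ⟨hz, hw⟩⟩
            exact hne.image_const 0
          have htop : fiberSup (G ×ˢ D) p (fun _ => 0) (0 : ℂ) = ⊤ := by
            refine top_unique ?_
            rw [← iSup_ofReal_top (q := fun b => p (x₀, b)) (fun b => hp _) hx₀]
            refine iSup₂_le fun b hb => ?_
            exact le_iSup₂ (f := fun x (_ : x ∈ {x ∈ G ×ˢ D | (fun _ => (0:ℂ)) x = 0}) =>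
              ENNReal.ofReal (p x)) (x₀, b) ⟨⟨hx₀G, hb⟩, rfl⟩
          refine (infProd_eq_zero (μ₀ := (0 : ℂ)) (minTerm_nonneg _ _ _) ?_ ?_).symm
          · rw [himg]; exact rfl
          · unfold minTerm
            rw [if_pos htop]
    rw [hset, csSup_singleton]
end
end

section
/- For any domains G ⊆ ℂⁿ, D ⊆ ℂᵐ and any nonempty sets A ⊆ G, B ⊆ D, the maximal family has the product property: d_{G×D}^max(A×B, (z,w)) = max{d_G^max(A,z), d_D^max(B,w)} for all (z,w) ∈ G×D, where d_G^max(A,·) := d_G^max(χ_A,·) with χ_A the characteristic function of A; equivalently, inf{k̃*_{G×D}((a,b),(z,w)) : (a,b) ∈ A×B} = max{inf{k̃*_G(a,z) : a ∈ A}, inf{k̃*_D(b,w) : b ∈ B}}. -/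
open Complex Set Filter Asymptotics
open scoped ENNReal

noncomputable section

variable {V W : Type*} [NormedAddCommGroup V] [NormedSpace ℂ V]
  [NormedAddCommGroup W] [NormedSpace ℂ W]

namespace Aux19

lemma zero_mem_discE : (0:ℂ) ∈ discE := by simp [discE]

lemma one_sub_ne_zero {lam : ℂ} (h : lam ∈ discE) : (1 - lam) ≠ 0 := by
  intro h0
  have : lam = 1 := by linear_combination -h0
  simp [discE, this] at h

lemma abs_ofReal_add_ofReal_mul_I_le (x y : ℝ) :
    ‖(x:ℂ) + (y:ℂ)*I‖ ≤ |x| + |y| := by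
  refine (norm_add_le _ _).trans ?_
  simp [Complex.norm_real]

lemma cos_sub_cos_re_bound {c : ℝ} (hc : 0 ≤ c) {w : ℂ} (hw : |w.im| ≤ c) :
    ‖Complex.cos w - ((Real.cos w.re : ℝ):ℂ)‖ ≤ Real.exp c - 1 := by
  have hcos : Complex.cos w =
      ((Real.cos w.re * Real.cosh w.im : ℝ):ℂ) - ((Real.sin w.re * Real.sinh w.im : ℝ):ℂ) * I := by
    conv_lhs => rw [← Complex.re_add_im w]
    rw [Complex.cos_add, Complex.cos_mul_I, Complex.sin_mul_I]
    push_cast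
    ring
  have heq : Complex.cos w - ((Real.cos w.re : ℝ):ℂ) =
      ((Real.cos w.re * (Real.cosh w.im - 1) : ℝ):ℂ) +
        ((-(Real.sin w.re * Real.sinh w.im) : ℝ):ℂ) * I := by
    rw [hcos]; push_cast; ring
  rw [heq]
  refine (abs_ofReal_add_ofReal_mul_I_le _ _).trans ?_
  have h1 : |Real.cos w.re * (Real.cosh w.im - 1)| ≤ Real.cosh c - 1 := by
    rw [abs_mul]
    have hb : |Real.cosh w.im - 1| = Real.cosh w.im - 1 := by
      rw [_root_.abs_of_nonneg]; linarith [Real.one_le_cosh w.im]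
    rw [hb]
    have hc1 : Real.cosh w.im ≤ Real.cosh c := by
      rw [Real.cosh_le_cosh]
      rwa [_root_.abs_of_nonneg hc]
    nlinarith [Real.abs_cos_le_one w.re, abs_nonneg (Real.cos w.re), Real.one_le_cosh w.im]
  have h2 : |(-(Real.sin w.re * Real.sinh w.im))| ≤ Real.sinh c := by
    rw [abs_neg, abs_mul, Real.abs_sinh]
    have h3 : Real.sinh |w.im| ≤ Real.sinh c := by rwa [Real.sinh_le_sinh]
    nlinarith [Real.abs_sin_le_one w.re, abs_nonneg (Real.sin w.re),
      Real.sinh_nonneg_iff.mpr (abs_nonneg w.im), abs_nonneg (Real.sin w.re)]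
  have : Real.cosh c - 1 + Real.sinh c = Real.exp c - 1 := by
    rw [Real.cosh_eq, Real.sinh_eq]; ring
  linarith

/-- A holomorphic map of the disc into a thin neighborhood of `[0,1]` hitting `0` and `1`. -/
lemma thinDisc {δ : ℝ} (hδ : 0 < δ) :
    ∃ μ ∈ discE, ∃ ψ : ℂ → ℂ, DifferentiableOn ℂ ψ discE ∧ ψ 0 = 0 ∧ ψ μ = 1 ∧
      ∀ lam ∈ discE, ∃ t ∈ Set.Icc (0:ℝ) 1, ‖ψ lam - (t:ℂ)‖ < δ := by
  set c : ℝ := Real.log (1 + δ) with hc_def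
  have hc : 0 < c := Real.log_pos (by linarith)
  have hπ : (0:ℝ) < Real.pi := Real.pi_pos
  set σ : ℝ := 2*c/Real.pi with hσ_def
  have hσ : 0 < σ := by positivity
  set T : ℝ := Real.pi^2/(2*c) with hT_def
  have hT : 0 < T := by positivity
  set e : ℝ := Real.exp T with he_def
  have he : 1 < e := by
    rw [he_def]
    calc (1:ℝ) = Real.exp 0 := Real.exp_zero.symm
      _ < Real.exp T := Real.exp_lt_exp.mpr hT
  set m : ℝ := (e - 1)/(e + 1) with hm_def
  have hm0 : 0 ≤ m := by apply div_nonneg <;> linarith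
  have hm1 : m < 1 := by rw [div_lt_one (by linarith)]; linarith
  set ζ : ℂ → ℂ := fun lam => (1 + lam)/(1 - lam) with hζ_def
  set h : ℂ → ℂ := fun lam => (σ:ℂ) * Complex.log (ζ lam) with hh_def
  set ψ : ℂ → ℂ := fun lam => (1 - Complex.cos (h lam))/2 with hψ_def
  -- positivity of the real part of ζ
  have hre : ∀ lam ∈ discE, 0 < (ζ lam).re := by
    intro lam hlam
    have hne := one_sub_ne_zero hlam
    have habs : lam.re^2 + lam.im^2 < 1 := by
      have := hlam
      simp only [discE, mem_setOf_eq] at this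
      have h2 : ‖lam‖ ^ 2 < 1 := by nlinarith [norm_nonneg lam]
      rwa [Complex.sq_norm, Complex.normSq_apply, ← pow_two, ← pow_two] at h2
    have hns : 0 < Complex.normSq (1 - lam) := Complex.normSq_pos.mpr hne
    rw [hζ_def]
    simp only [Complex.div_re]
    have h1re : (1 + lam).re = 1 + lam.re := by simp
    have h1im : (1 + lam).im = lam.im := by simp
    have h2re : (1 - lam).re = 1 - lam.re := by simp
    have h2im : (1 - lam).im = -lam.im := by simp
    rw [h1re, h1im, h2re, h2im]
    have : (1 + lam.re) * (1 - lam.re) / Complex.normSq (1 - lam)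
        + lam.im * -lam.im / Complex.normSq (1 - lam)
        = (1 - (lam.re^2 + lam.im^2)) / Complex.normSq (1 - lam) := by ring
    rw [this]
    exact div_pos (by linarith) hns
  have hζ_slit : ∀ lam ∈ discE, ζ lam ∈ Complex.slitPlane := fun lam hl =>
    Complex.mem_slitPlane_iff.mpr (Or.inl (hre lam hl))
  -- differentiability
  have hψdiff : DifferentiableOn ℂ ψ discE := by
    intro lam hlam
    apply DifferentiableAt.differentiableWithinAt
    have dζ : DifferentiableAt ℂ ζ lam := by
      apply DifferentiableAt.div
      · fun_prop
      · fun_prop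
      · exact one_sub_ne_zero hlam
    have dlog : DifferentiableAt ℂ (fun x => Complex.log (ζ x)) lam :=
      (Complex.differentiableAt_log (hζ_slit lam hlam)).comp lam dζ
    have dh : DifferentiableAt ℂ h lam := dlog.const_mul _
    have dcos : DifferentiableAt ℂ (fun x => Complex.cos (h x)) lam :=
      Complex.differentiable_cos.differentiableAt.comp lam dh
    exact ((differentiableAt_const (1:ℂ)).sub dcos).div_const 2
  -- value at 0
  have hψ0 : ψ 0 = 0 := by
    have : ζ 0 = 1 := by simp [hζ_def]
    simp [hψ_def, hh_def, this, Complex.log_one]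
  -- value at μ
  have hμmem : ((m:ℝ):ℂ) ∈ discE := by
    simp only [discE, mem_setOf_eq, Complex.norm_real, Real.norm_eq_abs]
    rwa [_root_.abs_of_nonneg hm0]
  have hζμ : ζ ((m:ℝ):ℂ) = ((e:ℝ):ℂ) := by
    have hm1' : (1:ℝ) - m ≠ 0 := by linarith
    have hr : (1 + m)/(1 - m) = e := by
      have he1 : e + 1 ≠ 0 := by linarith
      have h1 : (1:ℝ) + m = 2*e/(e+1) := by rw [hm_def]; field_simp; ring
      have h2 : (1:ℝ) - m = 2/(e+1) := by rw [hm_def]; field_simp; ring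
      rw [h1, h2]
      field_simp
    have : ζ ((m:ℝ):ℂ) = (((1 + m)/(1-m) : ℝ) : ℂ) := by
      show ((1:ℂ) + (m:ℂ))/(1 - (m:ℂ)) = _
      push_cast
      ring
    rw [this, hr]
  have hcne : c ≠ 0 := ne_of_gt hc
  have hπne : Real.pi ≠ 0 := ne_of_gt hπ
  have hψμ : ψ ((m:ℝ):ℂ) = 1 := by
    have hσT : σ * T = Real.pi := by
      rw [hσ_def, hT_def]
      field_simp
    have hh1 : h ((m:ℝ):ℂ) = ((Real.pi:ℝ):ℂ) := by
      show (σ:ℂ) * Complex.log (ζ ((m:ℝ):ℂ)) = _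
      rw [hζμ, ← Complex.ofReal_log (by positivity : (0:ℝ) ≤ e)]
      rw [show Real.log e = T from by rw [he_def, Real.log_exp]]
      rw [← Complex.ofReal_mul, hσT]
    show (1 - Complex.cos (h ((m:ℝ):ℂ)))/2 = 1
    rw [hh1, ← Complex.ofReal_cos, Real.cos_pi]
    norm_num
  refine ⟨((m:ℝ):ℂ), hμmem, ψ, hψdiff, hψ0, hψμ, ?_⟩
  -- approximation property
  intro lam hlam
  set w : ℂ := h lam with hw_def
  have him : |w.im| ≤ c := by
    have harg : |(ζ lam).arg| < Real.pi/2 :=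
      Complex.abs_arg_lt_pi_div_two_iff.mpr (Or.inl (hre lam hlam))
    have : w.im = σ * (ζ lam).arg := by
      rw [hw_def, hh_def]
      simp [Complex.log_im]
    rw [this, abs_mul, _root_.abs_of_nonneg hσ.le]
    calc σ * |(ζ lam).arg| ≤ σ * (Real.pi/2) := by
          apply mul_le_mul_of_nonneg_left harg.le hσ.le
      _ = c := by rw [hσ_def]; field_simp
  refine ⟨(1 - Real.cos w.re)/2, ?_, ?_⟩
  · constructor
    · have := Real.cos_le_one w.re; linarith
    · have := Real.neg_one_le_cos w.re; linarith
  · have heq : ψ lam - ((((1 - Real.cos w.re)/2 : ℝ)):ℂ)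
        = -(Complex.cos w - ((Real.cos w.re : ℝ):ℂ))/2 := by
      rw [hψ_def]
      simp only
      rw [← hw_def]
      push_cast
      ring
    rw [heq]
    rw [norm_div, norm_neg]
    have hb := cos_sub_cos_re_bound hc.le him
    have hec : Real.exp c = 1 + δ := Real.exp_log (by linarith)
    simp only [Complex.norm_ofNat]
    calc ‖Complex.cos w - ((Real.cos w.re : ℝ):ℂ)‖ / 2
        ≤ (Real.exp c - 1)/2 := by linarith
      _ < δ := by rw [hec]; linarith


/-- Existence of an analytic disc through two points of a domain in `ℂⁿ`. -/
lemma discExists {n : ℕ} {G : Set (Fin n → ℂ)} (hG : IsDom G) {a z : Fin n → ℂ}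
    (ha : a ∈ G) (hz : z ∈ G) :
    ∃ μ ∈ discE, ∃ φ : ℂ → (Fin n → ℂ), DifferentiableOn ℂ φ discE ∧
      MapsTo φ discE G ∧ φ 0 = a ∧ φ μ = z := by
  -- a path from a to z in G
  have hpc : IsPathConnected G := (hG.1.isConnected_iff_isPathConnected).mp hG.2
  obtain ⟨γ, hγ⟩ := hpc.joinedIn a ha z hz
  set K : Set (Fin n → ℂ) := Set.range γ with hK_def
  have hKc : IsCompact K := isCompact_range γ.continuous
  have hKG : K ⊆ G := Set.range_subset_iff.mpr hγ
  obtain ⟨δ₀, hδ₀, hthick⟩ := hKc.exists_thickening_subset_open hG.1 hKG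
  set ε : ℝ := δ₀/8 with hε_def
  have hε : 0 < ε := by positivity
  -- Weierstrass approximation of the coordinates of γ
  have hexre : ∀ j : Fin n, ∃ p : Polynomial ℝ,
      ∀ t : unitInterval, |p.eval (t:ℝ) - (γ t j).re| ≤ ε := by
    intro j
    set f : C(Set.Icc (0:ℝ) 1, ℝ) :=
      ⟨fun t => (γ ⟨t.1, t.2⟩ j).re, by fun_prop⟩ with hf_def
    obtain ⟨p, hp⟩ := exists_polynomial_near_continuousMap 0 1 f ε hε
    refine ⟨p, fun t => ?_⟩
    have := (Polynomial.toContinuousMapOn p (Set.Icc 0 1) - f).norm_coe_le_norm ⟨t.1, t.2⟩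
    have h2 : ‖(Polynomial.toContinuousMapOn p (Set.Icc 0 1) - f) ⟨t.1, t.2⟩‖ < ε :=
      lt_of_le_of_lt this hp
    simpa [hf_def, Real.norm_eq_abs] using h2.le
  have hexim : ∀ j : Fin n, ∃ p : Polynomial ℝ,
      ∀ t : unitInterval, |p.eval (t:ℝ) - (γ t j).im| ≤ ε := by
    intro j
    set f : C(Set.Icc (0:ℝ) 1, ℝ) :=
      ⟨fun t => (γ ⟨t.1, t.2⟩ j).im, by fun_prop⟩ with hf_def
    obtain ⟨p, hp⟩ := exists_polynomial_near_continuousMap 0 1 f ε hε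
    refine ⟨p, fun t => ?_⟩
    have := (Polynomial.toContinuousMapOn p (Set.Icc 0 1) - f).norm_coe_le_norm ⟨t.1, t.2⟩
    have h2 : ‖(Polynomial.toContinuousMapOn p (Set.Icc 0 1) - f) ⟨t.1, t.2⟩‖ < ε :=
      lt_of_le_of_lt this hp
    simpa [hf_def, Real.norm_eq_abs] using h2.le
  choose u hu using hexre
  choose v hv using hexim
  -- the polynomial curve
  set P : ℂ → (Fin n → ℂ) := fun ω j => Polynomial.aeval ω (u j) + Polynomial.aeval ω (v j) * I
    with hP_def
  have hPdiff : Differentiable ℂ P :=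
    differentiable_pi.mpr fun j =>
      ((u j).differentiable_aeval).add (((v j).differentiable_aeval).mul_const I)
  have haeval : ∀ (p : Polynomial ℝ) (t : ℝ), Polynomial.aeval ((t:ℝ):ℂ) p = ((p.eval t : ℝ):ℂ) := by
    intro p t
    have := Polynomial.aeval_algebraMap_apply_eq_algebraMap_eval (A := ℂ) t p
    simpa using this
  have hPest : ∀ t : unitInterval, ‖P ((t:ℝ):ℂ) - γ t‖ ≤ 2*ε := by
    intro t
    rw [pi_norm_le_iff_of_nonneg (by positivity)]
    intro j
    have e1 := haeval (u j) t
    have e2 := haeval (v j) t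
    have hd : P ((t:ℝ):ℂ) j - γ t j =
        (((u j).eval (t:ℝ) - (γ t j).re : ℝ):ℂ) + (((v j).eval (t:ℝ) - (γ t j).im : ℝ):ℂ) * I := by
      rw [hP_def]
      simp only
      rw [e1, e2]
      conv_lhs => rw [← Complex.re_add_im (γ t j)]
      push_cast
      ring
    rw [Pi.sub_apply, hd]
    refine (abs_ofReal_add_ofReal_mul_I_le _ _).trans ?_
    have := hu j t
    have := hv j t
    linarith
  -- correct the endpoints
  set Q : ℂ → (Fin n → ℂ) := fun ω => P ω + (1 - ω) • (a - P 0) + ω • (z - P 1) with hQ_def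
  have hQdiff : Differentiable ℂ Q := by
    apply Differentiable.add
    apply Differentiable.add hPdiff
    · exact ((differentiable_const (1:ℂ)).sub differentiable_id).smul (differentiable_const _)
    · exact differentiable_fun_id.smul_const _
  have hQ0 : Q 0 = a := by
    rw [hQ_def]; simp
  have hQ1 : Q 1 = z := by
    rw [hQ_def]; simp
  have h0K : ‖a - P 0‖ ≤ 2*ε := by
    have := hPest 0
    have h00 : (((0:unitInterval):ℝ):ℂ) = 0 := by norm_num
    rw [h00, γ.source] at this
    rwa [norm_sub_rev]
  have h1K : ‖z - P 1‖ ≤ 2*ε := by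
    have := hPest 1
    have h11 : (((1:unitInterval):ℝ):ℂ) = 1 := by norm_num
    rw [h11, γ.target] at this
    rwa [norm_sub_rev]
  have hQest : ∀ t : unitInterval, dist (Q ((t:ℝ):ℂ)) (γ t) ≤ 6*ε := by
    intro t
    rw [dist_eq_norm]
    have hsplit : Q ((t:ℝ):ℂ) - γ t =
        (P ((t:ℝ):ℂ) - γ t) + (1 - ((t:ℝ):ℂ)) • (a - P 0) + ((t:ℝ):ℂ) • (z - P 1) := by
      rw [hQ_def]; simp only; abel
    rw [hsplit]
    have ht0 : (0:ℝ) ≤ (t:ℝ) := t.2.1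
    have ht1 : (t:ℝ) ≤ 1 := t.2.2
    have hn1 : ‖(1 - ((t:ℝ):ℂ)) • (a - P 0)‖ ≤ 2*ε := by
      rw [norm_smul]
      have : ‖(1:ℂ) - ((t:ℝ):ℂ)‖ = 1 - (t:ℝ) := by
        rw [show (1:ℂ) - ((t:ℝ):ℂ) = (((1 - t:ℝ)):ℂ) by push_cast; ring]
        rw [Complex.norm_real, Real.norm_eq_abs, _root_.abs_of_nonneg (by linarith)]
      rw [this]
      calc (1 - (t:ℝ)) * ‖a - P 0‖ ≤ 1 * (2*ε) := by
            apply mul_le_mul (by linarith) h0K (norm_nonneg _) (by norm_num)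
        _ = 2*ε := by ring
    have hn2 : ‖((t:ℝ):ℂ) • (z - P 1)‖ ≤ 2*ε := by
      rw [norm_smul, Complex.norm_real, Real.norm_eq_abs, _root_.abs_of_nonneg ht0]
      calc (t:ℝ) * ‖z - P 1‖ ≤ 1 * (2*ε) := by
            apply mul_le_mul ht1 h1K (norm_nonneg _) (by norm_num)
        _ = 2*ε := by ring
    calc ‖(P ((t:ℝ):ℂ) - γ t) + (1 - ((t:ℝ):ℂ)) • (a - P 0) + ((t:ℝ):ℂ) • (z - P 1)‖
        ≤ ‖(P ((t:ℝ):ℂ) - γ t) + (1 - ((t:ℝ):ℂ)) • (a - P 0)‖ + ‖((t:ℝ):ℂ) • (z - P 1)‖ :=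
          norm_add_le _ _
      _ ≤ (‖P ((t:ℝ):ℂ) - γ t‖ + ‖(1 - ((t:ℝ):ℂ)) • (a - P 0)‖) + ‖((t:ℝ):ℂ) • (z - P 1)‖ := by
          gcongr; exact norm_add_le _ _
      _ ≤ (2*ε + 2*ε) + 2*ε := add_le_add (add_le_add (hPest t) hn1) hn2
      _ = 6*ε := by ring
  -- uniform continuity on a compact set
  have hQuc := (isCompact_closedBall (0:ℂ) 2).uniformContinuousOn_of_continuous
    hQdiff.continuous.continuousOn
  rw [Metric.uniformContinuousOn_iff] at hQuc
  obtain ⟨δ₁, hδ₁, hQc⟩ := hQuc ε hε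
  set δ' : ℝ := min δ₁ (1/2) with hδ'_def
  have hδ' : 0 < δ' := lt_min hδ₁ (by norm_num)
  obtain ⟨μ, hμ, ψ, hψd, hψ0, hψ1, hψap⟩ := thinDisc hδ'
  refine ⟨μ, hμ, fun lam => Q (ψ lam), hQdiff.comp_differentiableOn hψd, ?_, ?_, ?_⟩
  · -- maps into G
    intro lam hlam
    obtain ⟨t, ht, hcl⟩ := hψap lam hlam
    have htabs : ‖((t:ℝ):ℂ)‖ ≤ 1 := by
      rw [Complex.norm_real, Real.norm_eq_abs, _root_.abs_of_nonneg ht.1]; exact ht.2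
    have h1 : ψ lam ∈ Metric.closedBall (0:ℂ) 2 := by
      rw [Metric.mem_closedBall, dist_zero_right]
      calc ‖ψ lam‖ ≤ ‖ψ lam - ((t:ℝ):ℂ)‖ + ‖((t:ℝ):ℂ)‖ := by
            simpa using norm_add_le (ψ lam - ((t:ℝ):ℂ)) ((t:ℝ):ℂ)
        _ ≤ δ' + 1 := add_le_add hcl.le htabs
        _ ≤ 2 := by
            have : δ' ≤ 1/2 := min_le_right _ _
            linarith
    have h2 : (((t:ℝ)):ℂ) ∈ Metric.closedBall (0:ℂ) 2 := by
      rw [Metric.mem_closedBall, dist_zero_right]; linarith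
    have h3 : dist (Q (ψ lam)) (Q ((t:ℝ):ℂ)) < ε := by
      apply hQc _ h1 _ h2
      rw [Complex.dist_eq]
      exact lt_of_lt_of_le hcl (min_le_left _ _)
    have h4 : dist (Q ((t:ℝ):ℂ)) (γ ⟨t, ht⟩) ≤ 6*ε := hQest ⟨t, ht⟩
    have h5 : dist (Q (ψ lam)) (γ ⟨t, ht⟩) < δ₀ := by
      calc dist (Q (ψ lam)) (γ ⟨t, ht⟩)
          ≤ dist (Q (ψ lam)) (Q ((t:ℝ):ℂ)) + dist (Q ((t:ℝ):ℂ)) (γ ⟨t, ht⟩) := dist_triangle _ _ _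
        _ < ε + 6*ε := by linarith
        _ < δ₀ := by rw [hε_def]; linarith
    apply hthick
    rw [Metric.mem_thickening_iff]
    exact ⟨γ ⟨t, ht⟩, Set.mem_range_self _, h5⟩
  · show Q (ψ 0) = a
    rw [hψ0, hQ0]
  · show Q (ψ μ) = z
    rw [hψ1, hQ1]



/-- The defining set of the Lempert function. -/
def ASet (G : Set V) (a z : V) : Set ℝ :=
  {r : ℝ | ∃ μ ∈ discE, ∃ φ : ℂ → V, DifferentiableOn ℂ φ discE ∧
    MapsTo φ discE G ∧ φ 0 = a ∧ φ μ = z ∧ r = ‖μ‖}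

lemma lemp_eq_sInf (G : Set V) (a z : V) : lemp G a z = sInf (ASet G a z) := rfl

lemma ASet_nonneg {G : Set V} {a z : V} : ∀ r ∈ ASet G a z, (0:ℝ) ≤ r := by
  rintro r ⟨μ, hμ, φ, hd, hm, h0, h1, rfl⟩
  exact norm_nonneg μ

lemma ASet_bddBelow {G : Set V} {a z : V} : BddBelow (ASet G a z) :=
  ⟨0, fun r hr => ASet_nonneg r hr⟩

lemma ASet_lt_one {G : Set V} {a z : V} : ∀ r ∈ ASet G a z, r < 1 := by
  rintro r ⟨μ, hμ, φ, hd, hm, h0, h1, rfl⟩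
  exact hμ

lemma lemp_nonneg (G : Set V) (a z : V) : 0 ≤ lemp G a z :=
  Real.sInf_nonneg (fun r hr => ASet_nonneg r hr)

lemma lemp_le_one {G : Set V} {a z : V} (hne : (ASet G a z).Nonempty) : lemp G a z ≤ 1 := by
  obtain ⟨r, hr⟩ := hne
  exact (csInf_le ASet_bddBelow hr).trans (ASet_lt_one r hr).le

/-- Projection of a disc in a product to the first factor. -/
lemma ASet_fst {G : Set V} {D : Set W} {a z : V} {b w : W} {r : ℝ}
    (hr : r ∈ ASet (G ×ˢ D) (a, b) (z, w)) : r ∈ ASet G a z := by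
  obtain ⟨μ, hμ, φ, hd, hm, h0, h1, rfl⟩ := hr
  refine ⟨μ, hμ, fun lam => (φ lam).1, hd.fst, fun lam hl => (hm hl).1, ?_, ?_, rfl⟩
  · show (φ 0).1 = a
    rw [h0]
  · show (φ μ).1 = z
    rw [h1]

lemma ASet_snd {G : Set V} {D : Set W} {a z : V} {b w : W} {r : ℝ}
    (hr : r ∈ ASet (G ×ˢ D) (a, b) (z, w)) : r ∈ ASet D b w := by
  obtain ⟨μ, hμ, φ, hd, hm, h0, h1, rfl⟩ := hr
  refine ⟨μ, hμ, fun lam => (φ lam).2, hd.snd, fun lam hl => (hm hl).2, ?_, ?_, rfl⟩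
  · show (φ 0).2 = b
    rw [h0]
  · show (φ μ).2 = w
    rw [h1]

/-- Combination of two discs, assuming the first parameter dominates. -/
lemma prodElt_aux {G : Set V} {D : Set W} {a z : V} {b w : W} {μ₁ μ₂ : ℂ}
    (hμ₁ : μ₁ ∈ discE) (hμ₂ : μ₂ ∈ discE)
    {φ₁ : ℂ → V} (hd₁ : DifferentiableOn ℂ φ₁ discE) (hm₁ : MapsTo φ₁ discE G)
    (h01 : φ₁ 0 = a) (h11 : φ₁ μ₁ = z)
    {φ₂ : ℂ → W} (hd₂ : DifferentiableOn ℂ φ₂ discE) (hm₂ : MapsTo φ₂ discE D)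
    (h02 : φ₂ 0 = b) (h12 : φ₂ μ₂ = w)
    (hle : ‖μ₂‖ ≤ ‖μ₁‖) :
    ‖μ₁‖ ∈ ASet (G ×ˢ D) (a, b) (z, w) := by
  by_cases hz1 : μ₁ = 0
  · have hz2 : μ₂ = 0 := by
      rw [hz1] at hle
      simp only [norm_zero] at hle
      exact norm_eq_zero.mp (le_antisymm hle (norm_nonneg μ₂))
    have hza : z = a := by rw [← h01, ← h11, hz1]
    have hwb : w = b := by rw [← h02, ← h12, hz2]
    refine ⟨μ₁, hμ₁, fun lam => (φ₁ lam, φ₂ lam), hd₁.prodMk hd₂,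
      fun lam hl => Set.mk_mem_prod (hm₁ hl) (hm₂ hl), ?_, ?_, rfl⟩
    · show (φ₁ 0, φ₂ 0) = (a, b)
      rw [h01, h02]
    · show (φ₁ μ₁, φ₂ μ₁) = (z, w)
      rw [hz1, h01, h02, hza, hwb]
  · have hq : ‖μ₂ / μ₁‖ ≤ 1 := by
      rw [norm_div]
      exact div_le_one_of_le₀ hle (norm_nonneg μ₁)
    have hmaps : MapsTo (fun lam : ℂ => lam * (μ₂ / μ₁)) discE discE := by
      intro lam hl
      simp only [discE, mem_setOf_eq, norm_mul]
      calc ‖lam‖ * ‖μ₂ / μ₁‖ ≤ ‖lam‖ * 1 :=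
            mul_le_mul_of_nonneg_left hq (norm_nonneg lam)
        _ = ‖lam‖ := mul_one _
        _ < 1 := hl
    refine ⟨μ₁, hμ₁, fun lam => (φ₁ lam, φ₂ (lam * (μ₂ / μ₁))), ?_, ?_, ?_, ?_, rfl⟩
    · exact hd₁.prodMk (hd₂.comp ((differentiable_fun_id.mul_const _).differentiableOn) hmaps)
    · intro lam hl
      exact Set.mk_mem_prod (hm₁ hl) (hm₂ (hmaps hl))
    · show (φ₁ 0, φ₂ (0 * (μ₂ / μ₁))) = (a, b)
      rw [show (0:ℂ) * (μ₂ / μ₁) = 0 from zero_mul _, h01, h02]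
    · show (φ₁ μ₁, φ₂ (μ₁ * (μ₂ / μ₁))) = (z, w)
      rw [show μ₁ * (μ₂ / μ₁) = μ₂ from by field_simp, h11, h12]

/-- Swapping the factors of a product disc. -/
lemma ASet_swap {G : Set V} {D : Set W} {a z : V} {b w : W} {r : ℝ}
    (hr : r ∈ ASet (D ×ˢ G) (b, a) (w, z)) : r ∈ ASet (G ×ˢ D) (a, b) (z, w) := by
  obtain ⟨μ, hμ, φ, hd, hm, h0, h1, rfl⟩ := hr
  refine ⟨μ, hμ, fun lam => ((φ lam).2, (φ lam).1), hd.snd.prodMk hd.fst,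
    fun lam hl => Set.mk_mem_prod (hm hl).2 (hm hl).1, ?_, ?_, rfl⟩
  · show ((φ 0).2, (φ 0).1) = (a, b)
    rw [h0]
  · show ((φ μ).2, (φ μ).1) = (z, w)
    rw [h1]

lemma prodElt {G : Set V} {D : Set W} {a z : V} {b w : W} {r₁ r₂ : ℝ}
    (h₁ : r₁ ∈ ASet G a z) (h₂ : r₂ ∈ ASet D b w) :
    max r₁ r₂ ∈ ASet (G ×ˢ D) (a, b) (z, w) := by
  obtain ⟨μ₁, hμ₁, φ₁, hd₁, hm₁, h01, h11, rfl⟩ := h₁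
  obtain ⟨μ₂, hμ₂, φ₂, hd₂, hm₂, h02, h12, rfl⟩ := h₂
  rcases le_total ‖μ₂‖ ‖μ₁‖ with hle | hle
  · rw [max_eq_left hle]
    exact prodElt_aux hμ₁ hμ₂ hd₁ hm₁ h01 h11 hd₂ hm₂ h02 h12 hle
  · rw [max_eq_right hle]
    exact ASet_swap (prodElt_aux hμ₂ hμ₁ hd₂ hm₂ h02 h12 hd₁ hm₁ h01 h11 hle)

/-- The product property of the Lempert function. -/
lemma lemp_prod {G : Set V} {D : Set W} {a z : V} {b w : W}
    (hGne : (ASet G a z).Nonempty) (hDne : (ASet D b w).Nonempty) :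
    lemp (G ×ˢ D) (a, b) (z, w) = max (lemp G a z) (lemp D b w) := by
  apply le_antisymm
  · apply le_of_forall_pos_le_add
    intro ε hε
    obtain ⟨r₁, hr₁, hlt₁⟩ := exists_lt_of_csInf_lt hGne
      (lt_add_of_pos_right (lemp G a z) hε)
    obtain ⟨r₂, hr₂, hlt₂⟩ := exists_lt_of_csInf_lt hDne
      (lt_add_of_pos_right (lemp D b w) hε)
    have hm := prodElt hr₁ hr₂
    calc lemp (G ×ˢ D) (a, b) (z, w) ≤ max r₁ r₂ := csInf_le ASet_bddBelow hm
      _ ≤ max (lemp G a z) (lemp D b w) + ε := by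
          apply max_le
          · exact hlt₁.le.trans (add_le_add_left (le_max_left _ _) ε)
          · exact hlt₂.le.trans (add_le_add_left (le_max_right _ _) ε)
  · apply le_csInf
    · obtain ⟨r₁, hr₁⟩ := hGne
      obtain ⟨r₂, hr₂⟩ := hDne
      exact ⟨max r₁ r₂, prodElt hr₁ hr₂⟩
    · intro r hr
      exact max_le (csInf_le ASet_bddBelow (ASet_fst hr))
        (csInf_le ASet_bddBelow (ASet_snd hr))

/-- `dMax` for an indicator weight is the infimum of `lemp` over the subset. -/
lemma dMax_indicator {G : Set V} {A : Set V} (hAG : A ⊆ G) (hA : A.Nonempty) {z : V}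
    (hle : ∀ a ∈ A, lemp G a z ≤ 1) :
    dMax G (Set.indicator A 1) z = sInf {r : ℝ | ∃ a ∈ A, r = lemp G a z} := by
  set S : Set ℝ := {r : ℝ | ∃ a ∈ A, r = lemp G a z} with hS_def
  set T : Set ℝ := {r : ℝ | ∃ a ∈ G, r = lemp G a z ^ (Set.indicator A 1 a : ℝ)} with hT_def
  have hST : S ⊆ T := by
    rintro r ⟨a, haA, rfl⟩
    exact ⟨a, hAG haA, by rw [Set.indicator_of_mem haA, Pi.one_apply, Real.rpow_one]⟩
  have hSne : S.Nonempty := by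
    obtain ⟨a₀, ha₀⟩ := hA
    exact ⟨lemp G a₀ z, a₀, ha₀, rfl⟩
  have hTbdd : BddBelow T := by
    refine ⟨0, ?_⟩
    rintro r ⟨a, haG, rfl⟩
    exact Real.rpow_nonneg (lemp_nonneg G a z) _
  have hSbdd : BddBelow S := by
    refine ⟨0, ?_⟩
    rintro r ⟨a, haA, rfl⟩
    exact lemp_nonneg G a z
  show sInf T = sInf S
  apply le_antisymm
  · exact csInf_le_csInf hTbdd hSne hST
  · apply le_csInf (hSne.mono hST)
    rintro r ⟨a, haG, rfl⟩
    by_cases hmem : a ∈ A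
    · rw [Set.indicator_of_mem hmem, Pi.one_apply, Real.rpow_one]
      exact csInf_le hSbdd ⟨a, hmem, rfl⟩
    · rw [Set.indicator_of_notMem hmem, Real.rpow_zero]
      obtain ⟨a₀, ha₀⟩ := hA
      exact (csInf_le hSbdd ⟨a₀, ha₀, rfl⟩).trans (hle a₀ ha₀)

/-- `inf max = max inf` for nonnegative families. -/
lemma sInf_max_eq {α β : Type*} {A : Set α} {B : Set β} (hA : A.Nonempty) (hB : B.Nonempty)
    (f : α → ℝ) (g : β → ℝ) (hf0 : ∀ a ∈ A, 0 ≤ f a) (hg0 : ∀ b ∈ B, 0 ≤ g b) :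
    sInf {r : ℝ | ∃ q ∈ A ×ˢ B, r = max (f q.1) (g q.2)} =
      max (sInf {r : ℝ | ∃ a ∈ A, r = f a}) (sInf {r : ℝ | ∃ b ∈ B, r = g b}) := by
  set SA : Set ℝ := {r : ℝ | ∃ a ∈ A, r = f a} with hSA
  set SB : Set ℝ := {r : ℝ | ∃ b ∈ B, r = g b} with hSB
  set SP : Set ℝ := {r : ℝ | ∃ q ∈ A ×ˢ B, r = max (f q.1) (g q.2)} with hSP
  have hSAne : SA.Nonempty := by obtain ⟨a, ha⟩ := hA; exact ⟨f a, a, ha, rfl⟩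
  have hSBne : SB.Nonempty := by obtain ⟨b, hb⟩ := hB; exact ⟨g b, b, hb, rfl⟩
  have hSAbdd : BddBelow SA := ⟨0, by rintro r ⟨a, ha, rfl⟩; exact hf0 a ha⟩
  have hSBbdd : BddBelow SB := ⟨0, by rintro r ⟨b, hb, rfl⟩; exact hg0 b hb⟩
  apply le_antisymm
  · apply le_of_forall_pos_le_add
    intro ε hε
    obtain ⟨r₁, ⟨a, ha, rfl⟩, hlt₁⟩ := exists_lt_of_csInf_lt hSAne
      (lt_add_of_pos_right (sInf SA) hε)
    obtain ⟨r₂, ⟨b, hb, rfl⟩, hlt₂⟩ := exists_lt_of_csInf_lt hSBne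
      (lt_add_of_pos_right (sInf SB) hε)
    have hmem : max (f a) (g b) ∈ SP := ⟨(a, b), Set.mk_mem_prod ha hb, rfl⟩
    have hbddP : BddBelow SP := by
      refine ⟨0, ?_⟩
      rintro r ⟨q, hq, rfl⟩
      exact le_max_of_le_left (hf0 q.1 hq.1)
    calc sInf SP ≤ max (f a) (g b) := csInf_le hbddP hmem
      _ ≤ max (sInf SA) (sInf SB) + ε := by
          apply max_le
          · exact hlt₁.le.trans (add_le_add_left (le_max_left _ _) ε)
          · exact hlt₂.le.trans (add_le_add_left (le_max_right _ _) ε)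
  · apply le_csInf
    · obtain ⟨a, ha⟩ := hA
      obtain ⟨b, hb⟩ := hB
      exact ⟨max (f a) (g b), (a, b), Set.mk_mem_prod ha hb, rfl⟩
    · rintro r ⟨q, hq, rfl⟩
      exact max_le_max (csInf_le hSAbdd ⟨q.1, hq.1, rfl⟩) (csInf_le hSBbdd ⟨q.2, hq.2, rfl⟩)

end Aux19

open Aux19

/-- the product property for the maximal family:
`d_{G×D}^max(A×B,(z,w)) = max (d_G^max(A,z), d_D^max(B,w))`. -/
theorem stmt_19 {n m : ℕ} (G : Set (Fin n → ℂ)) (hG : IsDom G)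
    (D : Set (Fin m → ℂ)) (hD : IsDom D)
    (A : Set (Fin n → ℂ)) (hAG : A ⊆ G) (hA : A.Nonempty)
    (B : Set (Fin m → ℂ)) (hBD : B ⊆ D) (hB : B.Nonempty)
    (z : Fin n → ℂ) (hz : z ∈ G) (w : Fin m → ℂ) (hw : w ∈ D) :
    dMax (G ×ˢ D) (Set.indicator (A ×ˢ B) 1) (z, w) =
      max (dMax G (Set.indicator A 1) z) (dMax D (Set.indicator B 1) w) := by
  -- nonemptiness of the disc sets
  have hGne : ∀ a ∈ G, (ASet G a z).Nonempty := by
    intro a ha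
    obtain ⟨μ, hμ, φ, hd, hm, h0, h1⟩ := discExists hG ha hz
    exact ⟨‖μ‖, μ, hμ, φ, hd, hm, h0, h1, rfl⟩
  have hDne : ∀ b ∈ D, (ASet D b w).Nonempty := by
    intro b hb
    obtain ⟨μ, hμ, φ, hd, hm, h0, h1⟩ := discExists hD hb hw
    exact ⟨‖μ‖, μ, hμ, φ, hd, hm, h0, h1, rfl⟩
  have hPne : ∀ q ∈ G ×ˢ D, (ASet (G ×ˢ D) (q.1, q.2) (z, w)).Nonempty := by
    intro q hq
    obtain ⟨r₁, hr₁⟩ := hGne q.1 hq.1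
    obtain ⟨r₂, hr₂⟩ := hDne q.2 hq.2
    exact ⟨max r₁ r₂, prodElt hr₁ hr₂⟩
  -- rewrite the three dMax's
  rw [dMax_indicator hAG hA (fun a ha => lemp_le_one (hGne a (hAG ha))),
    dMax_indicator hBD hB (fun b hb => lemp_le_one (hDne b (hBD hb))),
    dMax_indicator (Set.prod_mono hAG hBD) (hA.prod hB) (fun q hq => by
      have hq' : q ∈ G ×ˢ D := Set.prod_mono hAG hBD hq
      have := lemp_le_one (hPne q hq')
      rwa [show ((q.1, q.2) : (Fin n → ℂ) × (Fin m → ℂ)) = q from Prod.mk.eta] at this)]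
  have hset : {r : ℝ | ∃ q ∈ A ×ˢ B, r = lemp (G ×ˢ D) q (z, w)} =
      {r : ℝ | ∃ q ∈ A ×ˢ B, r = max (lemp G q.1 z) (lemp D q.2 w)} := by
    ext r
    constructor
    · rintro ⟨q, hq, rfl⟩
      refine ⟨q, hq, ?_⟩
      rw [← lemp_prod (hGne q.1 (hAG hq.1)) (hDne q.2 (hBD hq.2))]
    · rintro ⟨q, hq, rfl⟩
      refine ⟨q, hq, ?_⟩
      rw [← lemp_prod (hGne q.1 (hAG hq.1)) (hDne q.2 (hBD hq.2))]
  rw [hset]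
  exact sInf_max_eq hA hB (fun a => lemp G a z) (fun b => lemp D b w)
    (fun a ha => lemp_nonneg G a z) (fun b hb => lemp_nonneg D b w)
end
end
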